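/- arXiv:2410.13548 — 4 statements merged into one kernel-verified Lean document; each statement's English description precedes it below -/
import Mathlib

section
/- For any (not necessarily independent) random variables x₁,...,xₐ and y (all finite-valued), I((x₁,...,xₐ) ; y) ≤ Σ_{i=1}^{a} I(xᵢ ; (y, x_{≠i})), where x_{≠i} denotes the tuple of all xⱼ with j ≠ i. -/
/-!
Reveal the coordinates one at a time. If `i ∉ S`, the chain rule and `I(xᵢ ; x_S) ≥ 0` give
`I((xᵢ, x_S) ; y) ≤ I(x_S ; y) + I(xᵢ ; (y, x_S))`, and since `x_S` is a function of
`x_{≠i}`, data processing bounds the last term by `I(xᵢ ; (y, x_{≠i}))`. Induction on `S` then gives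
`I(x_S ; y) ≤ ∑_{i ∈ S} I(xᵢ ; (y, x_{≠i}))`.

All information inequalities used reduce to the submodularity
`H(X, Y, Z) + H(Y) ≤ H(X, Y) + H(Y, Z)`, which is Gibbs' inequality `log t ≤ t - 1` applied
to the ratio of `P(x, y) P(y, z) / P(y)` to `P(x, y, z)`.
-/

open Finset
open scoped Classical

noncomputable section

/-- `p` is a probability mass function on the finite sample space `Ω`. -/
def IsPMF {Ω : Type*} [Fintype Ω] (p : Ω → ℝ) : Prop :=
  (∀ ω, 0 ≤ p ω) ∧ ∑ ω, p ω = 1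

/-- Distribution (pmf) of the random variable `X` under the pmf `p`. -/
noncomputable def dist' {Ω α : Type*} [Fintype Ω] (p : Ω → ℝ) (X : Ω → α) : α → ℝ :=
  fun a => ∑ ω, if X ω = a then p ω else 0

/-- KL divergence between two pmfs on a finite space (natural log). -/
noncomputable def KL {α : Type*} [Fintype α] (q r : α → ℝ) : ℝ :=
  ∑ a, q a * Real.log (q a / r a)

/-- Mutual information between random variables `X` and `Y` under pmf `p`. -/
noncomputable def MI {Ω α β : Type*} [Fintype Ω] [Fintype α] [Fintype β]
    (p : Ω → ℝ) (X : Ω → α) (Y : Ω → β) : ℝ :=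
  KL (dist' p fun ω => (X ω, Y ω)) (fun ab => dist' p X ab.1 * dist' p Y ab.2)

open Real Function

section

variable {Ω α β γ : Type*} [Fintype Ω] {p : Ω → ℝ}

lemma dist'_nonneg (hp : ∀ ω, 0 ≤ p ω) (X : Ω → α) (a : α) : 0 ≤ dist' p X a :=
  Finset.sum_nonneg fun ω _ => by split_ifs; exacts [hp ω, le_rfl]

lemma dist'_pos (hp : ∀ ω, 0 ≤ p ω) (X : Ω → α) {ω : Ω} (hω : 0 < p ω) :
    0 < dist' p X (X ω) :=
  hω.trans_le <| by
    unfold dist'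
    simpa using Finset.single_le_sum (f := fun ω' => if X ω' = X ω then p ω' else 0)
      (fun ω' _ => by split_ifs; exacts [hp ω', le_rfl]) (Finset.mem_univ ω)

lemma sum_dist'_mul [Fintype α] (X : Ω → α) (g : α → ℝ) :
    ∑ a, dist' p X a * g a = ∑ ω, p ω * g (X ω) := by
  simp only [dist', Finset.sum_mul, ite_mul, zero_mul]
  rw [Finset.sum_comm]
  simp

lemma sum_dist'_eq_sum [Fintype α] (X : Ω → α) : ∑ a, dist' p X a = ∑ ω, p ω := by
  simpa using sum_dist'_mul (p := p) X fun _ => 1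

lemma sum_dist'_prod_right [Fintype β] (X : Ω → α) (Y : Ω → β) (a : α) :
    ∑ b, dist' p (fun ω => (X ω, Y ω)) (a, b) = dist' p X a := by
  simp only [dist']
  rw [Finset.sum_comm]
  refine Finset.sum_congr rfl fun ω _ => ?_
  by_cases h : X ω = a <;> simp [h]

lemma dist'_comp_of_injective {f : α → β} (hf : Injective f) (X : Ω → α) (a : α) :
    dist' p (fun ω => f (X ω)) (f a) = dist' p X a := by
  simp only [dist', hf.eq_iff]

lemma sum_mul_log_nonpos (hp : ∀ ω, 0 ≤ p ω) {F : Ω → ℝ} (hF : ∀ ω, 0 < p ω → 0 < F ω)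
    (hsum : ∑ ω, p ω * F ω ≤ ∑ ω, p ω) : ∑ ω, p ω * log (F ω) ≤ 0 := by
  have hlog : ∀ ω, p ω * log (F ω) ≤ p ω * F ω - p ω := fun ω => by
    rcases (hp ω).eq_or_lt with h | h
    · simp [← h]
    · nlinarith [log_le_sub_one_of_pos (hF ω h)]
  calc ∑ ω, p ω * log (F ω) ≤ ∑ ω, (p ω * F ω - p ω) := Finset.sum_le_sum fun ω _ => hlog ω
    _ ≤ 0 := by rw [Finset.sum_sub_distrib]; linarith

def entropy [Fintype α] (p : Ω → ℝ) (X : Ω → α) : ℝ :=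
  ∑ a, negMulLog (dist' p X a)

lemma entropy_eq_neg_sum [Fintype α] (X : Ω → α) :
    entropy p X = -∑ ω, p ω * log (dist' p X (X ω)) := by
  rw [entropy, ← sum_dist'_mul X fun a => log (dist' p X a), ← Finset.sum_neg_distrib]
  simp [negMulLog]

lemma entropy_comp_of_injective [Fintype α] [Fintype β] {f : α → β} (hf : Injective f)
    (X : Ω → α) :
    entropy p (fun ω => f (X ω)) = entropy p X := by
  simp only [entropy_eq_neg_sum, dist'_comp_of_injective hf]

lemma entropy_const [Fintype α] (hp : ∑ ω, p ω = 1) (c : α) : entropy p (fun _ => c) = 0 := by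
  simp [entropy_eq_neg_sum, dist', hp]

theorem sum_dist'_glue_le [Fintype α] [Fintype β] [Fintype γ] (hp : ∀ ω, 0 ≤ p ω)
    (X : Ω → α) (Y : Ω → β) (Z : Ω → γ) :
    ∑ v : (α × β) × γ, dist' p (fun ω => (X ω, Y ω)) v.1
        * (dist' p (fun ω => (Y ω, Z ω)) (v.1.2, v.2) / dist' p Y v.1.2)
      ≤ ∑ ω, p ω := by
  calc _ = ∑ ab : α × β, dist' p (fun ω => (X ω, Y ω)) ab * (dist' p Y ab.2 / dist' p Y ab.2) := by
        rw [Fintype.sum_prod_type]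
        simp only [← Finset.mul_sum, ← Finset.sum_div, sum_dist'_prod_right]
    _ ≤ ∑ ab : α × β, dist' p (fun ω => (X ω, Y ω)) ab :=
        Finset.sum_le_sum fun ab _ =>
          mul_le_of_le_one_right (dist'_nonneg hp _ _) (div_self_le_one _)
    _ = ∑ ω, p ω := sum_dist'_eq_sum _

theorem entropy_triple_add_entropy_le [Fintype α] [Fintype β] [Fintype γ] (hp : ∀ ω, 0 ≤ p ω)
    (X : Ω → α) (Y : Ω → β) (Z : Ω → γ) :
    entropy p (fun ω => ((X ω, Y ω), Z ω)) + entropy p Y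
      ≤ entropy p (fun ω => (X ω, Y ω)) + entropy p (fun ω => (Y ω, Z ω)) := by
  set T := fun ω => ((X ω, Y ω), Z ω)
  set dXY := dist' p fun ω => (X ω, Y ω)
  set dYZ := dist' p fun ω => (Y ω, Z ω)
  set dY := dist' p Y
  set dT := dist' p T
  set G : (α × β) × γ → ℝ := fun v => dXY v.1 * dYZ (v.1.2, v.2) / (dY v.1.2 * dT v)
  have hG_pos : ∀ ω, 0 < p ω → 0 < G (T ω) := fun ω h => by
    have := dist'_pos hp (fun ω => (X ω, Y ω)) h
    have := dist'_pos hp (fun ω => (Y ω, Z ω)) h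
    have := dist'_pos hp Y h
    have := dist'_pos hp T h
    positivity
  have hlog : ∀ ω, p ω * log (G (T ω)) = p ω * log (dXY (X ω, Y ω))
      + p ω * log (dYZ (Y ω, Z ω)) - p ω * log (dY (Y ω)) - p ω * log (dT (T ω)) := fun ω => by
    rcases (hp ω).eq_or_lt with h | h
    · simp [← h]
    · have hXY := dist'_pos hp (fun ω => (X ω, Y ω)) h
      have hYZ := dist'_pos hp (fun ω => (Y ω, Z ω)) h
      have hY := dist'_pos hp Y h
      have hT := dist'_pos hp T h
      simp only [G]
      rw [log_div (by positivity) (by positivity), log_mul hXY.ne' hYZ.ne',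
        log_mul hY.ne' hT.ne']
      ring
  have hmass : ∑ ω, p ω * G (T ω) ≤ ∑ ω, p ω :=
    calc ∑ ω, p ω * G (T ω) = ∑ v, dT v * G v := (sum_dist'_mul T G).symm
      _ ≤ ∑ v : (α × β) × γ, dXY v.1 * (dYZ (v.1.2, v.2) / dY v.1.2) :=
        Finset.sum_le_sum fun v _ => by
          obtain h | h := (show 0 ≤ dT v from dist'_nonneg hp T v).eq_or_lt
          · rw [← h, zero_mul]
            exact mul_nonneg (dist'_nonneg hp _ _)
              (div_nonneg (dist'_nonneg hp _ _) (dist'_nonneg hp _ _))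
          · refine le_of_eq ?_
            simp only [G]
            field_simp
      _ ≤ ∑ ω, p ω := sum_dist'_glue_le hp X Y Z
  have hgibbs := sum_mul_log_nonpos hp hG_pos hmass
  simp only [hlog, Finset.sum_sub_distrib, Finset.sum_add_distrib] at hgibbs
  simp only [entropy_eq_neg_sum]
  linarith

theorem MI_eq_entropy [Fintype α] [Fintype β] (hp : ∀ ω, 0 ≤ p ω) (X : Ω → α) (Y : Ω → β) :
    MI p X Y = entropy p X + entropy p Y - entropy p (fun ω => (X ω, Y ω)) := by
  have hterm : ∀ ω, p ω * log (dist' p (fun ω => (X ω, Y ω)) (X ω, Y ω)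
        / (dist' p X (X ω) * dist' p Y (Y ω))) =
      -(p ω * log (dist' p X (X ω))) + -(p ω * log (dist' p Y (Y ω)))
        - -(p ω * log (dist' p (fun ω => (X ω, Y ω)) (X ω, Y ω))) := fun ω => by
    rcases (hp ω).eq_or_lt with h | h
    · simp [← h]
    · have hXY := dist'_pos hp (fun ω => (X ω, Y ω)) h
      have hX := dist'_pos hp X h
      have hY := dist'_pos hp Y h
      rw [log_div hXY.ne' (by positivity), log_mul hX.ne' hY.ne']
      ring
  rw [MI, KL, sum_dist'_mul (fun ω => (X ω, Y ω))]
  simp only [entropy_eq_neg_sum, hterm, Finset.sum_sub_distrib, Finset.sum_add_distrib,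
    Finset.sum_neg_distrib]

section MutualInformation

variable [Fintype α] [Fintype β] [Fintype γ]

theorem MI_comm (hp : ∀ ω, 0 ≤ p ω) (X : Ω → α) (Y : Ω → β) : MI p X Y = MI p Y X := by
  have hswap : entropy p (fun ω => (Y ω, X ω)) = entropy p (fun ω => (X ω, Y ω)) :=
    entropy_comp_of_injective Prod.swap_injective fun ω => (X ω, Y ω)
  rw [MI_eq_entropy hp, MI_eq_entropy hp, hswap]
  ring

theorem MI_chain_rule (hp : ∀ ω, 0 ≤ p ω) (X : Ω → α) (Y : Ω → β) (Z : Ω → γ) :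
    MI p (fun ω => (X ω, Z ω)) Y + MI p X Z = MI p Z Y + MI p X (fun ω => (Y ω, Z ω)) := by
  have hassoc :
      entropy p (fun ω => ((X ω, Z ω), Y ω)) = entropy p (fun ω => (X ω, Y ω, Z ω)) :=
    entropy_comp_of_injective (f := fun v : α × β × γ => ((v.1, v.2.2), v.2.1))
      (fun v w h => by simp_all [Prod.ext_iff]) fun ω => (X ω, Y ω, Z ω)
  have hswap : entropy p (fun ω => (Z ω, Y ω)) = entropy p (fun ω => (Y ω, Z ω)) :=
    entropy_comp_of_injective Prod.swap_injective fun ω => (Y ω, Z ω)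
  simp only [MI_eq_entropy hp, hassoc, hswap]
  ring

theorem MI_le_of_comp_right (hp : ∀ ω, 0 ≤ p ω) (X : Ω → α) {Y : Ω → β} {Y' : Ω → γ}
    (f : β → γ) (hY' : ∀ ω, Y' ω = f (Y ω)) : MI p X Y' ≤ MI p X Y := by
  obtain rfl : Y' = fun ω => f (Y ω) := funext hY'
  have hXY : entropy p (fun ω => ((X ω, f (Y ω)), Y ω)) = entropy p (fun ω => (X ω, Y ω)) :=
    entropy_comp_of_injective (f := fun v : α × β => ((v.1, f v.2), v.2))
      (fun v w h => by simp_all [Prod.ext_iff]) fun ω => (X ω, Y ω)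
  have hY : entropy p (fun ω => (f (Y ω), Y ω)) = entropy p Y :=
    entropy_comp_of_injective (f := fun b => (f b, b)) (fun b b' h => (Prod.ext_iff.1 h).2) Y
  have := entropy_triple_add_entropy_le hp X (fun ω => f (Y ω)) Y
  rw [MI_eq_entropy hp, MI_eq_entropy hp]
  linarith

theorem MI_le_of_comp_left (hp : ∀ ω, 0 ≤ p ω) {X : Ω → α} {X' : Ω → γ} (Y : Ω → β)
    (f : α → γ) (hX' : ∀ ω, X' ω = f (X ω)) : MI p X' Y ≤ MI p X Y := by
  rw [MI_comm hp, MI_comm hp X]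
  exact MI_le_of_comp_right hp Y f hX'

theorem MI_const_right (hp : IsPMF p) (X : Ω → α) (c : β) : MI p X (fun _ => c) = 0 := by
  have hXc : entropy p (fun ω => (X ω, c)) = entropy p X :=
    entropy_comp_of_injective (Prod.mk_left_injective c) X
  rw [MI_eq_entropy hp.1, entropy_const hp.2, hXc]
  ring

theorem MI_nonneg (hp : IsPMF p) (X : Ω → α) (Y : Ω → β) : 0 ≤ MI p X Y :=
  calc 0 = MI p X (fun _ => ()) := (MI_const_right hp X ()).symm
    _ ≤ MI p X Y := MI_le_of_comp_right hp.1 X (fun _ => ()) fun _ => rfl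

end MutualInformation

theorem MI_restrict_le_sum {ι : Type*} [Fintype ι] [DecidableEq ι] [Fintype α] [Fintype β]
    (hp : IsPMF p) (x : ι → Ω → α) (y : Ω → β) (S : Finset ι) :
    MI p (fun ω (i : S) => x i ω) y
      ≤ ∑ i ∈ S, MI p (x i) (fun ω => (y ω, fun j : {j // j ≠ i} => x j ω)) := by
  induction S using Finset.induction_on with
  | empty =>
    calc MI p (fun ω (i : (∅ : Finset ι)) => x i ω) y ≤ MI p (fun _ => ()) y :=
          MI_le_of_comp_left hp.1 y (fun _ i => absurd i.2 (Finset.notMem_empty _))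
            fun _ => funext fun i => absurd i.2 (Finset.notMem_empty _)
      _ = 0 := by rw [MI_comm hp.1, MI_const_right hp]
      _ = _ := Finset.sum_empty.symm
  | insert i S hi ih =>
    have hsplit : MI p (fun ω (j : (insert i S : Finset ι)) => x j ω) y
        ≤ MI p (fun ω => (x i ω, fun j : S => x j ω)) y :=
      MI_le_of_comp_left hp.1 y
        (fun q j =>
          if h : j.1 = i then q.1 else q.2 ⟨j, (Finset.mem_insert.1 j.2).resolve_left h⟩)
        fun ω => funext fun j => by split_ifs with h <;> simp [h]
    have hrest : MI p (x i) (fun ω => (y ω, fun j : S => x j ω))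
        ≤ MI p (x i) (fun ω => (y ω, fun j : {j // j ≠ i} => x j ω)) :=
      MI_le_of_comp_right hp.1 (x i)
        (fun q => (q.1, fun j : S => q.2 ⟨j, ne_of_mem_of_not_mem j.2 hi⟩)) fun _ => rfl
    have hchain := MI_chain_rule hp.1 (x i) y fun ω (j : S) => x j ω
    have hnonneg := MI_nonneg hp (x i) fun ω (j : S) => x j ω
    rw [Finset.sum_insert hi]
    linarith

end

/-- For arbitrary random variables `x₁,…,xₐ` and `y`:
`I((x₁,…,xₐ);y) ≤ ∑ᵢ I(xᵢ ; (y, x_{≠i}))`. -/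
theorem statement2 {Ω X Y : Type*} [Fintype Ω] [Fintype X] [Fintype Y]
    (p : Ω → ℝ) (hp : IsPMF p) (a : ℕ) (x : Fin a → Ω → X) (y : Ω → Y) :
    MI p (fun ω => fun i => x i ω) y
      ≤ ∑ i, MI p (x i) (fun ω => (y ω, fun j : {j : Fin a // j ≠ i} => x j.1 ω)) :=
  calc MI p (fun ω => fun i => x i ω) y
      ≤ MI p (fun ω (i : (Finset.univ : Finset (Fin a))) => x i ω) y :=
        MI_le_of_comp_left hp.1 y (fun v i => v ⟨i, Finset.mem_univ i⟩) fun _ => rfl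
    _ ≤ _ := MI_restrict_le_sum hp x y Finset.univ
end
end

section
/- Let D_cost be a distribution on the nonnegative reals with mean 1, and draw x₁,...,xₙ i.i.d. from D_cost. Let Δ(x₁,...,xₙ) be the minimum number of indices that must be removed so that the sum of the remaining xᵢ is at most n. Then E[Δ(x₁,...,xₙ)] ≤ 5√n. -/
/-!
Remove the `k` largest coordinates of `x`; if the remaining sum still exceeds `n`, then at the
dyadic scale `2 ^ j` of the largest remaining coordinate the truncations `min xᵢ 2 ^ (j + 1)` sum
to at least `n + k 2 ^ j`. These truncations have mean at most `1` and variance at most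
`2 ^ (j + 1)`, so by Chebyshev this has probability at most `2 n / (k ^ 2 2 ^ j)`; summing over
`j` gives `P(Δ > k) ≤ 4 n / k ^ 2`. Hence `E Δ ≤ K + ∑_{k ≥ K} 4 n / k ^ 2 ≤ K + 4 n / (K - 1)`,
which is at most `5 √n` for `K ≈ 2 √n`.
-/

open MeasureTheory ProbabilityTheory Finset

/-- `Delta n v` is the minimum number of coordinates that must be removed from `v` so that the
sum of the remaining coordinates is at most `n`. -/
noncomputable def Delta (n : ℕ) (v : Fin n → ℝ) : ℕ :=
  sInf {k | ∃ I : Finset (Fin n), I.card = k ∧ ∑ i ∈ Iᶜ, v i ≤ n}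

section Combinatorics

variable {n k : ℕ} {v : Fin n → ℝ}

lemma Delta_le_iff : Delta n v ≤ k ↔ ∃ I : Finset (Fin n), #I ≤ k ∧ ∑ i ∈ Iᶜ, v i ≤ n := by
  constructor
  · intro h
    obtain ⟨I, hI, hsum⟩ : Delta n v ∈ {k | ∃ I : Finset (Fin n), #I = k ∧ ∑ i ∈ Iᶜ, v i ≤ n} :=
      Nat.sInf_mem ⟨n, univ, by simp⟩
    exact ⟨I, hI ▸ h, hsum⟩
  · rintro ⟨I, hI, hsum⟩
    have : Delta n v ≤ #I := Nat.sInf_le ⟨I, rfl, hsum⟩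
    exact this.trans hI

lemma Delta_le_self : Delta n v ≤ n :=
  Delta_le_iff.2 ⟨univ, by simp, by simp⟩

lemma measurable_Delta : Measurable (Delta n) := by
  refine measurable_of_Iic fun k => ?_
  have : Delta n ⁻¹' Set.Iic k =
      ⋃ I : Finset (Fin n), ⋃ (_ : #I ≤ k), {v | ∑ i ∈ Iᶜ, v i ≤ (n : ℝ)} := by
    ext v
    simp [Delta_le_iff]
  rw [this]
  exact .iUnion fun I => .iUnion fun _ =>
    measurableSet_le (Finset.measurable_sum _ fun i _ => measurable_pi_apply i) measurable_const

lemma Finset.exists_card_eq_forall_le {α β : Type*} [Fintype α] [DecidableEq α] [LinearOrder β]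
    (f : α → β) {k : ℕ} (hk : k ≤ Fintype.card α) :
    ∃ I : Finset α, #I = k ∧ ∀ i ∈ I, ∀ l ∉ I, f l ≤ f i := by
  induction k with
  | zero => exact ⟨∅, by simp⟩
  | succ k ih =>
    obtain ⟨I, hIcard, hI⟩ := ih (by omega)
    have hne : Iᶜ.Nonempty := by
      rw [← card_pos, card_compl]
      omega
    obtain ⟨m, hm, hmax⟩ := exists_max_image Iᶜ f hne
    rw [mem_compl] at hm
    refine ⟨insert m I, by rw [card_insert_of_notMem hm, hIcard], ?_⟩
    intro i hi l hl
    rw [mem_insert, not_or] at hl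
    rcases mem_insert.1 hi with rfl | hi
    · exact hmax l (mem_compl.2 hl.2)
    · exact hI i hi l hl.2

/-- Remove the `k` largest coordinates; the largest remaining one, `t`, exceeds `1` because the
remaining sum exceeds `n`. At the dyadic scale `2 ^ j ≤ t < 2 ^ (j + 1)` truncation does not affect
the remaining coordinates, while each removed one still contributes at least `2 ^ j`. -/
lemma exists_add_mul_pow_le_sum_min (h : k < Delta n v) :
    ∃ j : ℕ, n + k * 2 ^ j ≤ ∑ i, min (v i) (2 ^ (j + 1)) := by
  have hkn : k < n := h.trans_le Delta_le_self
  obtain ⟨I, hIcard, hI⟩ := Finset.exists_card_eq_forall_le v (k := k) (by simp; omega)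
  have hrest : (n : ℝ) < ∑ i ∈ Iᶜ, v i := by
    by_contra! hle
    exact h.not_ge (Delta_le_iff.2 ⟨I, hIcard.le, hle⟩)
  have hne : Iᶜ.Nonempty := by
    rw [← card_pos, card_compl, hIcard, Fintype.card_fin]
    omega
  obtain ⟨m, hm, hmax⟩ := exists_max_image Iᶜ v hne
  have hcard : (#Iᶜ : ℝ) ≤ n := by exact_mod_cast (card_le_univ Iᶜ).trans_eq (Fintype.card_fin n)
  have ht : 1 < v m := by
    have : ∑ i ∈ Iᶜ, v i ≤ #Iᶜ * v m := by simpa using sum_le_sum hmax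
    nlinarith
  obtain ⟨j, hj, hj'⟩ := exists_nat_pow_near ht.le one_lt_two
  refine ⟨j, ?_⟩
  have hremoved : (k : ℝ) * 2 ^ j ≤ ∑ i ∈ I, min (v i) (2 ^ (j + 1)) := by
    have := card_nsmul_le_sum I (fun i => min (v i) ((2 : ℝ) ^ (j + 1))) (2 ^ j) fun i hi =>
      le_min (hj.trans (hI i hi m (mem_compl.1 hm))) (pow_le_pow_right₀ one_le_two j.le_succ)
    simpa [hIcard] using this
  have hkept : ∑ i ∈ Iᶜ, v i = ∑ i ∈ Iᶜ, min (v i) (2 ^ (j + 1)) :=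
    sum_congr rfl fun i hi => (min_eq_left ((hmax i hi).trans hj'.le)).symm
  rw [← sum_add_sum_compl I]
  linarith

end Combinatorics

section Probability

variable {Ω : Type*} [MeasurableSpace Ω] {μ : Measure Ω} [IsProbabilityMeasure μ]

lemma variance_min_le {X : Ω → ℝ} (hX : Integrable X μ) (h0 : 0 ≤ᵐ[μ] X) {c : ℝ} (hc : 0 ≤ c) :
    variance (fun ω => min (X ω) c) μ ≤ c * μ[X] := by
  have hbdd : ∀ᵐ ω ∂μ, min (X ω) c ∈ Set.Icc 0 c := by
    filter_upwards [h0] with ω hω using ⟨le_min hω hc, min_le_right _ _⟩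
  have hvar := variance_le_sub_mul_sub hbdd (hX.aemeasurable.min aemeasurable_const)
  have hmean_nonneg : 0 ≤ ∫ ω, min (X ω) c ∂μ :=
    integral_nonneg_of_ae (hbdd.mono fun ω hω => hω.1)
  have hmean_le : ∫ ω, min (X ω) c ∂μ ≤ μ[X] :=
    integral_mono_of_nonneg (hbdd.mono fun ω hω => hω.1) hX (ae_of_all _ fun ω => min_le_left _ _)
  nlinarith

lemma ProbabilityTheory.iIndepFun.measure_sum_integral_add_le_sum_le {ι : Type*} [Fintype ι]
    {Y : ι → Ω → ℝ} (hind : iIndepFun Y μ) (hY : ∀ i, MemLp (Y i) 2 μ) {a : ℝ} (ha : 0 < a) :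
    μ {ω | ∑ i, μ[Y i] + a ≤ ∑ i, Y i ω} ≤ ENNReal.ofReal ((∑ i, variance (Y i) μ) / a ^ 2) := by
  have hsum : MemLp (∑ i, Y i) 2 μ := memLp_finsetSum' _ fun i _ => hY i
  calc μ {ω | ∑ i, μ[Y i] + a ≤ ∑ i, Y i ω}
      ≤ μ {ω | a ≤ |(∑ i, Y i) ω - μ[∑ i, Y i]|} := by
        refine measure_mono fun ω hω => ?_
        simp only [Set.mem_ofPred_eq, Finset.sum_apply] at hω ⊢
        rw [integral_finsetSum _ fun i _ => (hY i).integrable one_le_two]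
        exact le_abs.2 (Or.inl (by linarith))
    _ ≤ ENNReal.ofReal (variance (∑ i, Y i) μ / a ^ 2) := meas_ge_le_variance_div_sq hsum ha
    _ = ENNReal.ofReal ((∑ i, variance (Y i) μ) / a ^ 2) := by
        rw [IndepFun.variance_sum (fun i _ => hY i) fun i _ j _ hij => hind.indepFun hij]

variable {n : ℕ} {x : Fin n → Ω → ℝ}

lemma measure_add_le_sum_min_le (hind : iIndepFun x μ)
    (h0 : ∀ i, 0 ≤ᵐ[μ] x i) (hint : ∀ i, Integrable (x i) μ) (hmean : ∀ i, μ[x i] ≤ 1)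
    {a c : ℝ} (ha : 0 < a) (hc : 0 ≤ c) :
    μ {ω | n + a ≤ ∑ i, min (x i ω) c} ≤ ENNReal.ofReal (n * c / a ^ 2) := by
  set Y : Fin n → Ω → ℝ := fun i ω => min (x i ω) c
  have hY : ∀ i, MemLp (Y i) 2 μ := fun i =>
    memLp_of_bounded (a := 0) (b := c)
      (by filter_upwards [h0 i] with ω hω using ⟨le_min hω hc, min_le_right _ _⟩)
      ((hint i).aemeasurable.min aemeasurable_const).aestronglyMeasurable 2
  have hYmean : ∀ i, μ[Y i] ≤ 1 := fun i =>
    (integral_mono_ae ((hY i).integrable one_le_two) (hint i)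
      (ae_of_all _ fun ω => min_le_left _ _)).trans (hmean i)
  have hYvar : ∀ i, variance (Y i) μ ≤ c := fun i =>
    (variance_min_le (hint i) (h0 i) hc).trans (by nlinarith [hmean i])
  calc μ {ω | n + a ≤ ∑ i, Y i ω} ≤ μ {ω | ∑ i, μ[Y i] + a ≤ ∑ i, Y i ω} := by
        refine measure_mono fun ω hω => ?_
        have : ∑ i, μ[Y i] ≤ (n : ℝ) := by
          simpa using sum_le_sum fun i (_ : i ∈ univ) => hYmean i
        simp only [Set.mem_ofPred_eq] at hω ⊢
        linarith
    _ ≤ ENNReal.ofReal ((∑ i, variance (Y i) μ) / a ^ 2) :=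
        (hind.comp (fun _ t => min t c) fun _ => measurable_id.min measurable_const
          ).measure_sum_integral_add_le_sum_le hY ha
    _ ≤ ENNReal.ofReal (n * c / a ^ 2) := by
        gcongr
        simpa using sum_le_sum fun i (_ : i ∈ univ) => hYvar i


lemma measure_lt_Delta_le (hind : iIndepFun x μ)
    (h0 : ∀ i, 0 ≤ᵐ[μ] x i) (hint : ∀ i, Integrable (x i) μ) (hmean : ∀ i, μ[x i] ≤ 1)
    {k : ℕ} (hk : 0 < k) :
    μ {ω | k < Delta n (fun i => x i ω)} ≤ ENNReal.ofReal (4 * n / k ^ 2) := by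
  set B : ℕ → Set Ω := fun j => {ω | n + k * 2 ^ j ≤ ∑ i, min (x i ω) (2 ^ (j + 1))}
  have hkR : (0 : ℝ) < k := Nat.cast_pos.2 hk
  have hB : ∀ j, μ (B j) ≤ ENNReal.ofReal (2 * n / k ^ 2 * 2⁻¹ ^ j) := fun j => by
    convert measure_add_le_sum_min_le hind h0 hint hmean (a := k * 2 ^ j)
      (c := 2 ^ (j + 1)) (by positivity) (by positivity) using 2
    rw [inv_pow]
    field_simp
    ring
  calc μ {ω | k < Delta n (fun i => x i ω)} ≤ μ (⋃ j, B j) :=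
        measure_mono fun ω hω => Set.mem_iUnion.2 (exists_add_mul_pow_le_sum_min hω)
    _ ≤ ∑' j, μ (B j) := measure_iUnion_le B
    _ ≤ ∑' j, ENNReal.ofReal (2 * n / k ^ 2 * 2⁻¹ ^ j) := ENNReal.tsum_le_tsum hB
    _ = ENNReal.ofReal (4 * n / k ^ 2) := by
        rw [← ENNReal.ofReal_tsum_of_nonneg (fun j => by positivity)
          ((summable_geometric_of_lt_one (by norm_num) (by norm_num)).mul_left _),
          tsum_mul_left, tsum_geometric_inv_two]
        ring_nf

end Probability

lemma integral_natCast_le_add_sum_measureReal {Ω : Type*} [MeasurableSpace Ω] {μ : Measure Ω}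
    [IsProbabilityMeasure μ] {f : Ω → ℕ} (hf : Measurable f) {N : ℕ} (hN : ∀ ω, f ω ≤ N)
    (K : ℕ) : ∫ ω, (f ω : ℝ) ∂μ ≤ K + ∑ k ∈ Ico K N, μ.real {ω | k < f ω} := by
  have hS : ∀ k, MeasurableSet {ω | k < f ω} := fun k => hf (measurableSet_Ioi (a := k))
  have hpoint : ∀ ω, (f ω : ℝ) ≤ K + ∑ k ∈ Ico K N, {ω | k < f ω}.indicator 1 ω := fun ω => by
    have hcount : f ω ≤ K + #{k ∈ Ico K N | k < f ω} := by
      have : Ico K (f ω) ⊆ {k ∈ Ico K N | k < f ω} := fun k hk => by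
        simp only [mem_filter, mem_Ico] at hk ⊢
        have := hN ω
        omega
      have := card_le_card this
      simp only [Nat.card_Ico] at this
      omega
    simp only [Set.indicator_apply, Set.mem_ofPred_eq, Pi.one_apply, sum_boole]
    exact_mod_cast hcount
  have hint : ∀ k, Integrable ({ω | k < f ω}.indicator (1 : Ω → ℝ)) μ := fun k =>
    (integrable_const 1).indicator (hS k)
  calc ∫ ω, (f ω : ℝ) ∂μ ≤ ∫ ω, ((K : ℝ) + ∑ k ∈ Ico K N, {ω | k < f ω}.indicator 1 ω) ∂μ :=
        integral_mono_of_nonneg (ae_of_all _ fun ω => by positivity)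
          ((integrable_const (K : ℝ)).add (integrable_finsetSum _ fun k _ => hint k))
          (ae_of_all _ hpoint)
    _ = K + ∑ k ∈ Ico K N, μ.real {ω | k < f ω} := by
        rw [integral_add (integrable_const (K : ℝ)) (integrable_finsetSum _ fun k _ => hint k),
          integral_finsetSum _ fun k _ => hint k]
        simp [integral_indicator_one (hS _)]

lemma sum_Ico_inv_sq_le {m : ℕ} (hm : m ≠ 0) (N : ℕ) :
    ∑ k ∈ Ico (m + 1) N, ((k : ℝ) ^ 2)⁻¹ ≤ (m : ℝ)⁻¹ := by
  calc ∑ k ∈ Ico (m + 1) N, ((k : ℝ) ^ 2)⁻¹ ≤ ∑ k ∈ Ioc m (max m N), ((k : ℝ) ^ 2)⁻¹ :=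
        sum_le_sum_of_subset_of_nonneg (fun k hk => by simp only [mem_Ico, mem_Ioc] at hk ⊢; omega)
          fun _ _ _ => by positivity
    _ ≤ (m : ℝ)⁻¹ - ((max m N : ℕ) : ℝ)⁻¹ := sum_Ioc_inv_sq_le_sub hm (le_max_left m N)
    _ ≤ (m : ℝ)⁻¹ := sub_le_self _ (by positivity)

theorem integral_Delta_le_five_mul_sqrt {Ω : Type*} [MeasurableSpace Ω] {μ : Measure Ω}
    [IsProbabilityMeasure μ] {n : ℕ} {x : Fin n → Ω → ℝ} (hmeas : ∀ i, Measurable (x i))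
    (hind : iIndepFun x μ) (h0 : ∀ i, 0 ≤ᵐ[μ] x i) (hint : ∀ i, Integrable (x i) μ)
    (hmean : ∀ i, μ[x i] ≤ 1) :
    ∫ ω, (Delta n (fun i => x i ω) : ℝ) ∂μ ≤ 5 * Real.sqrt n := by
  have hD : Measurable fun ω => Delta n (fun i => x i ω) :=
    measurable_Delta.comp (measurable_pi_lambda _ hmeas)
  by_cases hsmall : (n : ℝ) ≤ 5 * Real.sqrt n
  · refine le_trans ?_ hsmall
    simpa using integral_natCast_le_add_sum_measureReal (μ := μ) hD (fun _ => Delta_le_self) n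
  set s := Real.sqrt n
  have hs : 5 < s := by nlinarith [Real.sq_sqrt n.cast_nonneg, Real.sqrt_nonneg n]
  -- `K = m + 1` with `m = ⌈2 √n⌉` balances `K` against the tail bound `4 n / m`
  set m := ⌈2 * s⌉₊
  have hm : 2 * s ≤ m := Nat.le_ceil _
  have hm' : (m : ℝ) < 2 * s + 1 := Nat.ceil_lt_add_one (by positivity)
  have hm0 : m ≠ 0 := by
    have : (0 : ℝ) < m := by linarith
    exact_mod_cast this.ne'
  have htail : ∑ k ∈ Ico (m + 1) n, μ.real {ω | k < Delta n (fun i => x i ω)}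
      ≤ 4 * n / m := by
    calc ∑ k ∈ Ico (m + 1) n, μ.real {ω | k < Delta n (fun i => x i ω)}
        ≤ ∑ k ∈ Ico (m + 1) n, 4 * n * ((k : ℝ) ^ 2)⁻¹ := sum_le_sum fun k hk => by
          rw [← div_eq_mul_inv]
          exact ENNReal.toReal_le_of_le_ofReal (by positivity)
            (measure_lt_Delta_le hind h0 hint hmean (by simp only [mem_Ico] at hk; omega))
      _ ≤ 4 * n * (m : ℝ)⁻¹ := by
          rw [← mul_sum]
          exact mul_le_mul_of_nonneg_left (sum_Ico_inv_sq_le hm0 n) (by positivity)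
  have hfrac : 4 * (n : ℝ) / m ≤ 2 * s := by
    rw [div_le_iff₀ (by positivity), ← Real.sq_sqrt n.cast_nonneg]
    nlinarith
  calc ∫ ω, (Delta n (fun i => x i ω) : ℝ) ∂μ
      ≤ ((m + 1 : ℕ) : ℝ) + ∑ k ∈ Ico (m + 1) n, μ.real {ω | k < Delta n (fun i => x i ω)} :=
        integral_natCast_le_add_sum_measureReal hD (fun _ => Delta_le_self) (m + 1)
    _ ≤ 5 * s := by push_cast; linarith

theorem statement7_general {Ω : Type*} [MeasurableSpace Ω] (μ : Measure Ω) [IsProbabilityMeasure μ]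
    (n : ℕ) (ν : Measure ℝ)
    (hsupp : ν (Set.Iio 0) = 0) (hmean : ∫ t, t ∂ν = 1)
    (x : Fin n → Ω → ℝ) (hmeas : ∀ i, Measurable (x i))
    (hind : iIndepFun x μ)
    (hdist : ∀ i, μ.map (x i) = ν) :
    ∫ ω, (Delta n (fun i => x i ω) : ℝ) ∂μ ≤ 5 * Real.sqrt n := by
  have hmean_x : ∀ i, μ[x i] = 1 := fun i => by
    rw [← hmean, ← hdist i]
    exact (integral_map (f := fun t => t) (hmeas i).aemeasurable aestronglyMeasurable_id).symm
  have h0 : ∀ i, 0 ≤ᵐ[μ] x i := fun i => by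
    rw [Filter.EventuallyLE, ae_iff, ← hsupp, ← hdist i,
      Measure.map_apply (hmeas i) measurableSet_Iio]
    simp [Set.preimage, not_le]
  exact integral_Delta_le_five_mul_sqrt hmeas hind h0
    (fun i => integrable_of_integral_eq_one (hmean_x i)) fun i => (hmean_x i).le

/-- For `x₁,…,xₙ` i.i.d. from a distribution `ν` on the nonnegative reals with mean `1`,
`E[Δ(x₁,…,xₙ)] ≤ 5√n`. -/
theorem statement7 {Ω : Type*} [MeasurableSpace Ω] (μ : Measure Ω) [IsProbabilityMeasure μ]
    (n : ℕ) (ν : Measure ℝ) [IsProbabilityMeasure ν]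
    (hsupp : ν (Set.Iio 0) = 0) (hmean : ∫ t, t ∂ν = 1)
    (x : Fin n → Ω → ℝ) (hmeas : ∀ i, Measurable (x i))
    (hind : iIndepFun x μ)
    (hdist : ∀ i, μ.map (x i) = ν) :
    ∫ ω, (Delta n (fun i => x i ω) : ℝ) ∂μ ≤ 5 * Real.sqrt n :=
  statement7_general μ n ν hsupp hmean x hmeas hind hdist
end

section
/- Let D be a distribution on X, m ∈ ℕ, and draw S = (S₁,...,S_m) i.i.d. from D. Let g be any random variable on the same probability space taking values in a finite set G, and define D_goal(g₀) := E[Unif(S) ∣ g = g₀], the average empirical distribution conditioned on g = g₀. Then E_g[ d_TV(D, D_goal(g)) ] ≤ √( ln|G| / (2m) ). -/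
open Finset
open scoped Classical

noncomputable section

/-- Total variation distance between two pmfs on a finite space. -/
noncomputable def TV {X : Type*} [Fintype X] (q r : X → ℝ) : ℝ :=
  (∑ x, |q x - r x|) / 2

/-- The empirical (uniform) distribution of the multiset `s = (s₁,…,s_m)`. -/
noncomputable def emp {X : Type*} [Fintype X] (m : ℕ) (s : Fin m → X) : X → ℝ :=
  fun x => ((univ.filter fun i => s i = x).card : ℝ) / m

/-! For each `g₀`, the total variation between `D` and `D_goal(g₀)` is attained on the set
`A(g₀) = {D ≤ D_goal(g₀)}`, so the left-hand side equals `E[Z_g(S)]` with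
`Z_j(S) = Unif(S)(A(j)) - D(A(j))`. Each `Z_j` is the centred mean of `m` i.i.d. `[0,1]`-valued
variables, hence sub-Gaussian with variance proxy `1/(4m)` by Hoeffding's lemma. For any
selection `J` among `|G|` such variables, Jensen and a union bound give
`exp (t E[Z_J]) ≤ E[exp (t Z_J)] ≤ |G| exp (t² / (8m))`, and optimising `t` yields
`E[Z_J] ≤ √(ln|G| / (2m))`. -/

open Real MeasureTheory ProbabilityTheory

section Hoeffding

variable {X : Type*} [Fintype X]

theorem IsPMF.sum_mul_exp_le {D : X → ℝ} (hD : IsPMF D) {f : X → ℝ} {a b : ℝ}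
    (hf : ∀ x, f x ∈ Set.Icc a b) (t : ℝ) :
    ∑ x, D x * exp (t * (f x - ∑ y, D y * f y)) ≤ exp ((b - a) ^ 2 * t ^ 2 / 8) := by
  let _ : MeasurableSpace X := ⊤
  let μ : Measure X := ∑ x, ENNReal.ofReal (D x) • Measure.dirac x
  have hμ : ∀ x, μ.real {x} = D x := by
    simp [μ, Measure.real, Measure.dirac_apply', Set.indicator, hD.1]
  have : IsProbabilityMeasure μ := ⟨by
    simp [μ, ← ENNReal.ofReal_sum_of_nonneg (fun x _ => hD.1 x), hD.2]⟩
  have hint (F : X → ℝ) : ∫ x, F x ∂μ = ∑ x, D x * F x := by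
    rw [integral_fintype .of_finite]; simp [hμ]
  have := (hasSubgaussianMGF_of_mem_Icc (μ := μ) Measurable.of_discrete.aemeasurable
    (.of_forall hf)).mgf_le t
  convert this using 2
  · simp [mgf, hint]
  · simp [div_pow, sq_abs]; ring

theorem sum_emp_mul (m : ℕ) (s : Fin m → X) (f : X → ℝ) :
    ∑ x, emp m s x * f x = (∑ i, f (s i)) / m := by
  simp only [emp, div_mul_eq_mul_div, ← Finset.sum_div]
  congr 1
  rw [← Finset.sum_fiberwise univ s (fun i => f (s i))]
  refine Finset.sum_congr rfl fun x _ => ?_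
  rw [Finset.sum_congr rfl fun i hi => by rw [(Finset.mem_filter.1 hi).2], Finset.sum_const,
    nsmul_eq_mul]

theorem sum_emp_eq_one {m : ℕ} (hm : 0 < m) (s : Fin m → X) :
    ∑ x, emp m s x = 1 := by
  have hm' : (m : ℝ) ≠ 0 := Nat.cast_ne_zero.2 hm.ne'
  simpa [div_self hm'] using sum_emp_mul m s 1

theorem IsPMF.sum_prod_mul_exp_le {D : X → ℝ} (hD : IsPMF D) {f : X → ℝ} {a b : ℝ}
    (hf : ∀ x, f x ∈ Set.Icc a b) {m : ℕ} (hm : 0 < m) (t : ℝ) :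
    ∑ s : Fin m → X, (∏ i, D (s i)) * exp (t * ∑ x, (emp m s x - D x) * f x) ≤
      exp ((b - a) ^ 2 * t ^ 2 / (8 * m)) := by
  have hm' : (m : ℝ) ≠ 0 := Nat.cast_ne_zero.2 hm.ne'
  set μ := ∑ y, D y * f y
  have hexp (s : Fin m → X) : t * ∑ x, (emp m s x - D x) * f x = ∑ i, t / m * (f (s i) - μ) := by
    simp only [sub_mul, Finset.sum_sub_distrib, sum_emp_mul, ← Finset.mul_sum, Finset.sum_const,
      Finset.card_univ, Fintype.card_fin, nsmul_eq_mul]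
    field_simp
    rfl
  calc ∑ s : Fin m → X, (∏ i, D (s i)) * exp (t * ∑ x, (emp m s x - D x) * f x)
      = ∑ s : Fin m → X, ∏ i, D (s i) * exp (t / m * (f (s i) - μ)) := by
        simp only [hexp, exp_sum, ← Finset.prod_mul_distrib]
    _ = (∑ x, D x * exp (t / m * (f x - μ))) ^ m := by
        rw [← Fintype.prod_sum (fun (_ : Fin m) x => D x * exp (t / m * (f x - μ)))]
        simp
    _ ≤ exp ((b - a) ^ 2 * (t / m) ^ 2 / 8) ^ m :=
        pow_le_pow_left₀ (Finset.sum_nonneg fun x _ => mul_nonneg (hD.1 x) (exp_pos _).le)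
          (hD.sum_mul_exp_le hf _) m
    _ = exp ((b - a) ^ 2 * t ^ 2 / (8 * m)) := by
        rw [← exp_nat_mul]; congr 1; field_simp

end Hoeffding

theorem le_sqrt_of_forall_le_div_add {a c L : ℝ} (hc : 0 < c) (hL : 0 ≤ L)
    (h : ∀ t > 0, a ≤ L / t + c * t / 2) : a ≤ √(2 * c * L) := by
  rcases hL.eq_or_lt with rfl | hL
  · by_contra! ha
    rw [mul_zero, Real.sqrt_zero] at ha
    have := h (a / c) (div_pos ha hc)
    rw [zero_div, zero_add, mul_div_cancel₀ _ hc.ne'] at this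
    linarith
  · set s := √(2 * c * L)
    have hs : 0 < s := Real.sqrt_pos.2 (by positivity)
    have hs2 : s ^ 2 = 2 * c * L := Real.sq_sqrt (by positivity)
    calc a ≤ L / (s / c) + c * (s / c) / 2 := h _ (div_pos hs hc)
      _ = s := by field_simp; nlinarith

theorem IsPMF.sum_mul_comp_le_sqrt {Ω G : Type*} [Fintype Ω] [Fintype G] {p : Ω → ℝ}
    (hp : IsPMF p) (Y : G → Ω → ℝ) {c : ℝ} (hc : 0 < c)
    (hY : ∀ j, ∀ t > 0, ∑ ω, p ω * exp (t * Y j ω) ≤ exp (c * t ^ 2 / 2)) (J : Ω → G) :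
    ∑ ω, p ω * Y (J ω) ω ≤ √(2 * c * log (Fintype.card G)) := by
  obtain ⟨ω₀, -⟩ : (univ : Finset Ω).Nonempty :=
    Finset.nonempty_of_sum_ne_zero (by rw [hp.2]; exact one_ne_zero)
  have hN : (1 : ℝ) ≤ Fintype.card G := by exact_mod_cast Fintype.card_pos_iff.2 ⟨J ω₀⟩
  refine le_sqrt_of_forall_le_div_add hc (log_nonneg hN) fun t ht => ?_
  have hexp : exp (t * ∑ ω, p ω * Y (J ω) ω) ≤ Fintype.card G * exp (c * t ^ 2 / 2) := calc
    exp (t * ∑ ω, p ω * Y (J ω) ω) = exp (∑ ω, p ω • (t * Y (J ω) ω)) := by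
        simp only [Finset.mul_sum, smul_eq_mul]; ring_nf
    _ ≤ ∑ ω, p ω • exp (t * Y (J ω) ω) :=
        convexOn_exp.map_sum_le (fun ω _ => hp.1 ω) hp.2 (fun _ _ => Set.mem_univ _)
    _ ≤ ∑ ω, p ω * ∑ j, exp (t * Y j ω) := Finset.sum_le_sum fun ω _ =>
        mul_le_mul_of_nonneg_left (Finset.single_le_sum (f := fun j => exp (t * Y j ω))
          (fun j _ => (exp_pos _).le) (Finset.mem_univ _)) (hp.1 ω)
    _ = ∑ j, ∑ ω, p ω * exp (t * Y j ω) := by simp only [Finset.mul_sum]; exact Finset.sum_comm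
    _ ≤ ∑ _j : G, exp (c * t ^ 2 / 2) := Finset.sum_le_sum fun j _ => hY j t ht
    _ = Fintype.card G * exp (c * t ^ 2 / 2) := by simp
  have hlog := (le_log_iff_exp_le (by positivity)).2 hexp
  rw [log_mul (by positivity) (exp_ne_zero _), log_exp] at hlog
  rw [div_add' _ _ _ ht.ne', le_div_iff₀ ht]
  linarith

theorem sum_mul_comp_eq_sum_dist' {Ω α : Type*} [Fintype Ω] [Fintype α] (p : Ω → ℝ)
    (Y : Ω → α) (F : α → ℝ) : ∑ ω, p ω * F (Y ω) = ∑ a, dist' p Y a * F a := by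
  simp only [dist', Finset.sum_mul, ite_mul, zero_mul]
  rw [Finset.sum_comm]
  congr 1; ext ω
  simp

section TV

variable {X : Type*} [Fintype X]

theorem TV_eq_sum_ite {q r : X → ℝ} (h : ∑ x, q x = ∑ x, r x) :
    TV q r = ∑ x, if q x ≤ r x then r x - q x else 0 := by
  have habs (x : X) : |q x - r x| = 2 * (if q x ≤ r x then r x - q x else 0) - (r x - q x) := by
    split_ifs with hx
    · rw [abs_of_nonpos (by linarith)]; ring
    · rw [abs_of_pos (by linarith)]; ring
  rw [TV, Finset.sum_congr rfl fun x _ => habs x, Finset.sum_sub_distrib, ← Finset.mul_sum,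
    Finset.sum_sub_distrib, h]
  ring

variable {Ω G : Type*} [Fintype Ω]

/-- `condAvg p g r g₀ = E[r ∣ g = g₀]`; for `r ω = emp m (S ω)` it is the paper's `D_goal(g₀)`. -/
def condAvg (p : Ω → ℝ) (g : Ω → G) (r : Ω → X → ℝ) (g₀ : G) : X → ℝ :=
  fun x => (∑ ω, if g ω = g₀ then p ω * r ω x else 0) / dist' p g g₀

theorem dist'_mul_TV_condAvg {p : Ω → ℝ} (hp : ∀ ω, 0 ≤ p ω) (g : Ω → G) {r : Ω → X → ℝ}
    (hr : ∀ ω, ∑ x, r ω x = 1) {D : X → ℝ} (hD : ∑ x, D x = 1) (g₀ : G) :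
    dist' p g g₀ * TV D (condAvg p g r g₀) =
      ∑ ω, if g ω = g₀ then
        p ω * ∑ x, (r ω x - D x) * (if D x ≤ condAvg p g r g₀ x then 1 else 0) else 0 := by
  set P := dist' p g g₀
  set q := condAvg p g r g₀
  -- `TV D q` is attained on `{D ≤ q}`, where it is linear in the mixture `q`.
  have hP0 : 0 ≤ P := Finset.sum_nonneg fun ω _ => by split_ifs <;> simp [hp ω]
  rcases hP0.eq_or_lt with hP | hP
  · have hz (ω : Ω) (hω : g ω = g₀) : p ω = 0 := by
      simpa [hω] using (Finset.sum_eq_zero_iff_of_nonneg fun ω _ => by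
        split_ifs <;> simp [hp ω]).1 hP.symm ω (Finset.mem_univ ω)
    rw [← hP, zero_mul]
    exact (Finset.sum_eq_zero fun ω _ => by split_ifs with hω <;> simp [hz ω, hω]).symm
  have hPq (x : X) : P * q x = ∑ ω, if g ω = g₀ then p ω * r ω x else 0 :=
    mul_div_cancel₀ _ hP.ne'
  have hterm (x : X) : P * (q x - D x) = ∑ ω, if g ω = g₀ then p ω * (r ω x - D x) else 0 := by
    rw [mul_sub, hPq]
    simp only [P, dist', Finset.sum_mul, ← Finset.sum_sub_distrib]
    exact Finset.sum_congr rfl fun ω _ => by split_ifs <;> ring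
  have hq : ∑ x, q x = ∑ x, D x := by
    rw [hD, ← mul_right_inj' hP.ne', Finset.mul_sum, mul_one,
      Finset.sum_congr rfl fun x _ => hPq x, Finset.sum_comm]
    exact Finset.sum_congr rfl fun ω _ => by split_ifs <;> simp [← Finset.mul_sum, hr]
  rw [TV_eq_sum_ite hq.symm, Finset.mul_sum]
  calc ∑ x, P * (if D x ≤ q x then q x - D x else 0)
      = ∑ x, ∑ ω, if g ω = g₀ then p ω * ((r ω x - D x) * if D x ≤ q x then 1 else 0) else 0 := by
        refine Finset.sum_congr rfl fun x _ => ?_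
        by_cases hx : D x ≤ q x <;> simp [hx, hterm]
    _ = _ := by
        rw [Finset.sum_comm]
        exact Finset.sum_congr rfl fun ω _ => by split_ifs <;> simp [Finset.mul_sum]

theorem sum_dist'_mul_TV_condAvg [Fintype G] {p : Ω → ℝ} (hp : ∀ ω, 0 ≤ p ω) (g : Ω → G)
    {r : Ω → X → ℝ} (hr : ∀ ω, ∑ x, r ω x = 1) {D : X → ℝ} (hD : ∑ x, D x = 1) :
    ∑ g₀, dist' p g g₀ * TV D (condAvg p g r g₀) =
      ∑ ω, p ω * ∑ x, (r ω x - D x) * (if D x ≤ condAvg p g r (g ω) x then 1 else 0) := by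
  simp only [dist'_mul_TV_condAvg hp g hr hD]
  rw [Finset.sum_comm]
  simp

end TV

/-- If `S = (S₁,…,S_m)` is i.i.d. from `D` and `g` is any random variable taking values in a
finite set `G`, then with `D_goal(g₀) := E[Unif(S) ∣ g = g₀]`,
`E_g[d_TV(D, D_goal(g))] ≤ √(ln|G| / (2m))`. -/
theorem statement11 {Ω X G : Type*} [Fintype Ω] [Fintype X] [Fintype G]
    (p : Ω → ℝ) (hp : IsPMF p) (D : X → ℝ) (hD : IsPMF D)
    (m : ℕ) (hm : 0 < m) (S : Ω → Fin m → X)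
    (hS : dist' p S = fun s => ∏ i, D (s i)) (g : Ω → G) :
    ∑ g₀ : G, dist' p g g₀ *
        TV D (fun x => (∑ ω, if g ω = g₀ then p ω * emp m (S ω) x else 0) / dist' p g g₀)
      ≤ Real.sqrt (Real.log (Fintype.card G) / (2 * m)) := by
  set χ : G → X → ℝ := fun g₀ x =>
    if D x ≤ condAvg p g (fun ω => emp m (S ω)) g₀ x then 1 else 0
  have hχ : ∀ g₀ x, χ g₀ x ∈ Set.Icc 0 1 := fun g₀ x => by
    simp only [χ]; split_ifs <;> simp
  calc _ = ∑ ω, p ω * ∑ x, (emp m (S ω) x - D x) * χ (g ω) x :=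
        sum_dist'_mul_TV_condAvg hp.1 g (fun ω => sum_emp_eq_one hm (S ω)) hD.2
    _ ≤ √(2 * (1 / (4 * m)) * log (Fintype.card G)) := by
        refine hp.sum_mul_comp_le_sqrt (fun j ω => ∑ x, (emp m (S ω) x - D x) * χ j x)
          (c := 1 / (4 * m)) (by positivity) (fun j t _ => ?_) g
        rw [sum_mul_comp_eq_sum_dist' p S (fun s => exp (t * ∑ x, (emp m s x - D x) * χ j x)),
          hS]
        convert hD.sum_prod_mul_exp_le (hχ j) hm t using 2
        field_simp; ring
    _ = _ := by congr 1; field_simp; ring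
end
end

section
/- Let S = (S₁,...,S_m) be any random variable on X^m (X finite) and let n, k_max ∈ ℕ with n + k_max ≤ m. Then there exists k ≤ k_max such that E_{A,B}[ Cor(S_A ∣ S_B) ] ≤ (n(n−1)/(2(k_max+1))) · E_{i,B'}[ I(S_i ; S_{B'}) ], where A is a uniform size-n subset of [m], B a uniform size-k subset of [m]∖A, i uniform in [m], and B' a uniform size-(n+k_max−1) subset of [m]∖{i}. -/
open Finset
open scoped Classical

noncomputable section

/-- The pmf of the sample space conditioned on the event `z = c`. -/
noncomputable def condPMF {Ω γ : Type*} [Fintype Ω] (p : Ω → ℝ) (z : Ω → γ) (c : γ) : Ω → ℝ :=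
  fun ω => if z ω = c then p ω / dist' p z c else 0

/-- Multivariate total correlation `Cor(x₁,…,x_ι) = KL(D ‖ D₁ × ⋯)` of a finite family of
random variables. -/
noncomputable def CorF {Ω ι α : Type*} [Fintype Ω] [Fintype ι] [Fintype α]
    (p : Ω → ℝ) (x : ι → Ω → α) : ℝ :=
  KL (dist' p fun ω => fun i => x i ω) (fun v => ∏ i, dist' p (x i) (v i))

/-- Conditional multivariate total correlation `Cor(x ∣ z) = E_z[Cor(x ∣ z = c)]`. -/
noncomputable def CondCor {Ω ι α γ : Type*} [Fintype Ω] [Fintype ι] [Fintype α] [Fintype γ]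
    (p : Ω → ℝ) (x : ι → Ω → α) (z : Ω → γ) : ℝ :=
  ∑ c, dist' p z c * CorF (condPMF p z c) x

/-!
Write `h C` for the joint entropy of the coordinates `S_C`. Both `Cor(S_A ∣ S_B)` and
`I(S_i ; S_D)` are linear in `h`, and `h` is submodular with `h ∅ = 0`. Peeling one element `a`
off `A` is the chain rule
`Cor(S_A ∣ S_B) = Cor(S_{A∖a} ∣ S_B) + I(S_a ; S_{(A∖a) ∪ B}) - I(S_a ; S_B)`,
and averaging it over uniform `A`, `a`, `B` gives `F n k = ∑_{j<n} (g (j + k) - g k)`, where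
`F n k` is the left-hand side and `g s` is the average of `I(S_i ; S_D)` over `|D| = s`.
Submodularity makes `g` nonnegative and nondecreasing, so `∑_{k ≤ k_max} F n k` telescopes to at
most `∑_{j<n} j · g (n + k_max - 1) = n (n - 1) / 2 · g (n + k_max - 1)`, and some `k` does no worse
than the average over `k ≤ k_max`.
-/

open Real

namespace CorrelationRounding

variable {Ω α β γ ι : Type*} [Fintype Ω] {p : Ω → ℝ}

/-- Shannon entropy `-E[log P(Y = Y ω)]`, taken over the sample space so that the range of `Y`
need not be finite. -/
def entropy (p : Ω → ℝ) (Y : Ω → α) : ℝ :=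
  -∑ ω, p ω * log (dist' p Y (Y ω))

lemma sum_dist'_mul [Fintype α] (p : Ω → ℝ) (Y : Ω → α) (F : α → ℝ) :
    ∑ a, dist' p Y a * F a = ∑ ω, p ω * F (Y ω) := by
  simp only [dist', sum_mul, ite_mul, zero_mul]
  rw [sum_comm]
  simp

lemma sum_dist' [Fintype α] (p : Ω → ℝ) (Y : Ω → α) : ∑ a, dist' p Y a = ∑ ω, p ω := by
  simpa using sum_dist'_mul p Y 1

lemma dist'_nonneg (hp : ∀ ω, 0 ≤ p ω) (Y : Ω → α) (a : α) : 0 ≤ dist' p Y a :=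
  sum_nonneg fun ω _ => by split_ifs <;> simp [hp ω]

lemma le_dist'_self (hp : ∀ ω, 0 ≤ p ω) (Y : Ω → α) (ω : Ω) : p ω ≤ dist' p Y (Y ω) := by
  have := single_le_sum (f := fun ω' => if Y ω' = Y ω then p ω' else 0)
    (fun ω' _ => by split_ifs <;> simp [hp ω']) (mem_univ ω)
  simpa [dist'] using this

lemma dist'_le_dist'_comp (hp : ∀ ω, 0 ≤ p ω) (Y : Ω → α) (g : α → β) (a : α) :
    dist' p Y a ≤ dist' p (fun ω => g (Y ω)) (g a) :=
  sum_le_sum fun ω _ => by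
    by_cases h : Y ω = a
    · simp [h]
    · simp only [h, if_false]
      split_ifs <;> simp [hp ω]

lemma sum_mul_congr_of_pos (hp : ∀ ω, 0 ≤ p ω) {f g : Ω → ℝ}
    (hfg : ∀ ω, 0 < p ω → f ω = g ω) : ∑ ω, p ω * f ω = ∑ ω, p ω * g ω :=
  sum_congr rfl fun ω _ => by
    rcases (hp ω).eq_or_lt with h | h
    · simp [← h]
    · rw [hfg ω h]

lemma entropy_congr {Y : Ω → α} {Y' : Ω → β} (hY : ∀ ω ω', Y ω = Y ω' ↔ Y' ω = Y' ω') :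
    entropy p Y = entropy p Y' := by
  simp only [entropy, dist', hY]

lemma entropy_eq_zero (hp : ∑ ω, p ω = 1) {Y : Ω → α} (hY : ∀ ω ω', Y ω = Y ω') :
    entropy p Y = 0 := by
  have h1 (ω : Ω) : dist' p Y (Y ω) = 1 :=
    (sum_congr rfl fun ω' _ => if_pos (hY ω' ω)).trans hp
  simp [entropy, h1]

lemma KL_dist' [Fintype α] (p : Ω → ℝ) (W : Ω → α) (r : α → ℝ) :
    KL (dist' p W) r = ∑ ω, p ω * log (dist' p W (W ω) / r (W ω)) :=
  sum_dist'_mul p W _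

lemma MI_eq_entropy [Fintype α] [Fintype β] (hp : ∀ ω, 0 ≤ p ω) (X : Ω → α) (Y : Ω → β) :
    MI p X Y = entropy p X + entropy p Y - entropy p (fun ω => (X ω, Y ω)) := by
  rw [MI, KL_dist', sum_mul_congr_of_pos hp (g := fun ω =>
    log (dist' p (fun ω => (X ω, Y ω)) (X ω, Y ω)) - log (dist' p X (X ω))
      - log (dist' p Y (Y ω)))]
  · simp only [entropy, mul_sub, sum_sub_distrib]
    ring
  · intro ω hω
    have hXY := (le_dist'_self hp (fun ω => (X ω, Y ω)) ω).trans_lt' hω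
    have hX := (le_dist'_self hp X ω).trans_lt' hω
    have hY := (le_dist'_self hp Y ω).trans_lt' hω
    rw [log_div hXY.ne' (by positivity), log_mul hX.ne' hY.ne']
    ring

lemma CorF_eq_entropy [Fintype ι] [Fintype α] (hp : ∀ ω, 0 ≤ p ω) (x : ι → Ω → α) :
    CorF p x = ∑ i, entropy p (x i) - entropy p (fun ω i => x i ω) := by
  rw [CorF, KL_dist', sum_mul_congr_of_pos hp (g := fun ω =>
    log (dist' p (fun ω i => x i ω) (fun i => x i ω)) - ∑ i, log (dist' p (x i) (x i ω)))]
  · simp only [entropy, mul_sub, mul_sum, sum_sub_distrib, sum_neg_distrib]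
    rw [sum_comm]
    ring
  · intro ω hω
    have hx (i : ι) := (le_dist'_self hp (x i) ω).trans_lt' hω
    have hJ := (le_dist'_self hp (fun ω i => x i ω) ω).trans_lt' hω
    rw [log_div hJ.ne' (prod_pos fun i _ => hx i).ne',
      log_prod fun i _ => (hx i).ne']

lemma condPMF_nonneg (hp : ∀ ω, 0 ≤ p ω) (z : Ω → γ) (c : γ) (ω : Ω) :
    0 ≤ condPMF p z c ω := by
  unfold condPMF
  split_ifs
  exacts [div_nonneg (hp ω) (dist'_nonneg hp z c), le_rfl]

lemma isPMF_condPMF (hp : ∀ ω, 0 ≤ p ω) (z : Ω → γ) {c : γ} (hc : dist' p z c ≠ 0) :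
    IsPMF (condPMF p z c) := by
  refine ⟨condPMF_nonneg hp z c, ?_⟩
  have : ∑ ω, condPMF p z c ω = dist' p z c / dist' p z c := by
    simp only [condPMF, dist', sum_div, ite_div, zero_div]
  rw [this, div_self hc]

lemma dist'_condPMF (z : Ω → γ) (c : γ) (Y : Ω → α) (a : α) :
    dist' (condPMF p z c) Y a = dist' p (fun ω => (Y ω, z ω)) (a, c) / dist' p z c := by
  unfold dist' condPMF
  rw [sum_div]
  refine sum_congr rfl fun ω _ => ?_
  by_cases h1 : Y ω = a <;> by_cases h2 : z ω = c <;> simp [h1, h2, dist']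

lemma sum_dist'_mul_sum_condPMF [Fintype γ] (hp : ∀ ω, 0 ≤ p ω) (z : Ω → γ)
    (F : γ → Ω → ℝ) :
    ∑ c, dist' p z c * ∑ ω, condPMF p z c ω * F c ω = ∑ ω, p ω * F (z ω) ω := by
  simp only [mul_sum]
  rw [sum_comm]
  refine sum_congr rfl fun ω _ => ?_
  simp only [condPMF, ite_mul, zero_mul, mul_ite, mul_zero, sum_ite_eq,
    mem_univ, if_true]
  rcases (dist'_nonneg hp z (z ω)).eq_or_lt with h | h
  · have : p ω = 0 := le_antisymm (h ▸ le_dist'_self hp z ω) (hp ω)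
    simp [this, ← h]
  · field_simp

lemma sum_dist'_mul_entropy_condPMF [Fintype γ] (hp : ∀ ω, 0 ≤ p ω) (z : Ω → γ)
    (Y : Ω → α) :
    ∑ c, dist' p z c * entropy (condPMF p z c) Y
      = entropy p (fun ω => (Y ω, z ω)) - entropy p z := by
  simp only [entropy, mul_neg, sum_neg_distrib]
  rw [sum_dist'_mul_sum_condPMF hp z fun c ω => log (dist' (condPMF p z c) Y (Y ω)),
    sum_mul_congr_of_pos hp (g := fun ω =>
      log (dist' p (fun ω => (Y ω, z ω)) (Y ω, z ω)) - log (dist' p z (z ω)))]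
  · simp only [mul_sub, sum_sub_distrib]
    ring
  · intro ω hω
    have hYz := (le_dist'_self hp (fun ω => (Y ω, z ω)) ω).trans_lt' hω
    have hz := (le_dist'_self hp z ω).trans_lt' hω
    rw [dist'_condPMF, log_div hYz.ne' hz.ne']

lemma CondCor_eq_entropy [Fintype ι] [Fintype α] [Fintype γ] (hp : ∀ ω, 0 ≤ p ω)
    (x : ι → Ω → α) (z : Ω → γ) :
    CondCor p x z = ∑ i, entropy p (fun ω => (x i ω, z ω))
      - (Fintype.card ι - 1) * entropy p z - entropy p (fun ω => ((fun i => x i ω), z ω)) := by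
  simp only [CondCor, CorF_eq_entropy (condPMF_nonneg hp z _), mul_sub, mul_sum,
    sum_sub_distrib]
  rw [sum_comm]
  simp only [sum_dist'_mul_entropy_condPMF hp, sum_sub_distrib, sum_const,
    card_univ, nsmul_eq_mul]
  ring

lemma sum_mul_log_div_nonneg [Fintype α] {q r : α → ℝ} (hq : ∀ a, 0 ≤ q a) (hr : ∀ a, 0 ≤ r a)
    (hqr : ∀ a, 0 < q a → 0 < r a) (hsum : ∑ a, r a ≤ ∑ a, q a) :
    0 ≤ ∑ a, q a * log (q a / r a) := by
  have h (a : α) : q a - r a ≤ q a * log (q a / r a) := by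
    rcases (hq a).eq_or_lt with h | h
    · simp [← h, hr a]
    · have := one_sub_inv_le_log_of_pos (div_pos h (hqr a h))
      rw [inv_div] at this
      calc q a - r a = q a * (1 - r a / q a) := by field_simp
        _ ≤ _ := mul_le_mul_of_nonneg_left this h.le
  calc (0 : ℝ) ≤ ∑ a, (q a - r a) := by rw [sum_sub_distrib]; linarith
    _ ≤ _ := sum_le_sum fun a _ => h a

lemma MI_nonneg [Fintype α] [Fintype β] (hp : IsPMF p) (X : Ω → α) (Y : Ω → β) :
    0 ≤ MI p X Y := by
  have hJ := dist'_nonneg hp.1 (fun ω => (X ω, Y ω))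
  refine sum_mul_log_div_nonneg hJ
    (fun ab => mul_nonneg (dist'_nonneg hp.1 X _) (dist'_nonneg hp.1 Y _)) (fun ab hab => ?_) ?_
  · exact mul_pos (hab.trans_le (dist'_le_dist'_comp hp.1 _ Prod.fst ab))
      (hab.trans_le (dist'_le_dist'_comp hp.1 _ Prod.snd ab))
  · rw [Fintype.sum_prod_type, ← Fintype.sum_mul_sum, sum_dist', sum_dist', sum_dist', hp.2]
    norm_num

lemma entropy_submodular [Fintype α] [Fintype β] [Fintype γ] (hp : ∀ ω, 0 ≤ p ω)
    (U : Ω → α) (V : Ω → β) (Z : Ω → γ) :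
    entropy p (fun ω => ((U ω, V ω), Z ω)) + entropy p Z
      ≤ entropy p (fun ω => (U ω, Z ω)) + entropy p (fun ω => (V ω, Z ω)) := by
  -- `I(U ; V ∣ Z) ≥ 0`, as an average of mutual informations under the conditional pmfs
  have hcond : 0 ≤ ∑ c, dist' p Z c * MI (condPMF p Z c) U V :=
    sum_nonneg fun c _ => by
      rcases (dist'_nonneg hp Z c).eq_or_lt with h | h
      · simp [← h]
      · exact mul_nonneg h.le (MI_nonneg (isPMF_condPMF hp Z h.ne') U V)
  simp only [MI_eq_entropy (condPMF_nonneg hp Z _), mul_sub, mul_add, sum_sub_distrib,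
    sum_add_distrib, sum_dist'_mul_entropy_condPMF hp] at hcond
  linarith

section Counting

variable [DecidableEq ι]

lemma sum_powersetCard_succ_sum_erase (T : Finset ι) (n : ℕ) (F : Finset ι → ι → ℝ) :
    ∑ A ∈ T.powersetCard (n + 1), ∑ a ∈ A, F (A.erase a) a
      = ∑ A ∈ T.powersetCard n, ∑ a ∈ T \ A, F A a := by
  rw [sum_sigma', sum_sigma']
  refine sum_nbij' (fun x => ⟨x.1.erase x.2, x.2⟩) (fun x => ⟨insert x.2 x.1, x.2⟩)
    ?_ ?_ ?_ ?_ fun _ _ => rfl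
  · rintro ⟨A, a⟩ hx
    simp only [mem_sigma, mem_powersetCard, mem_sdiff] at hx ⊢
    exact ⟨⟨(erase_subset a A).trans hx.1.1, by rw [card_erase_of_mem hx.2, hx.1.2]; rfl⟩,
      hx.1.1 hx.2, notMem_erase a A⟩
  · rintro ⟨A, a⟩ hx
    simp only [mem_sigma, mem_powersetCard, mem_sdiff] at hx ⊢
    exact ⟨⟨insert_subset hx.2.1 hx.1.1, by rw [card_insert_of_notMem hx.2.2, hx.1.2]⟩,
      mem_insert_self a A⟩
  · rintro ⟨A, a⟩ hx
    simp only [mem_sigma] at hx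
    simp [insert_erase hx.2]
  · rintro ⟨A, a⟩ hx
    simp only [mem_sigma, mem_sdiff] at hx
    simp [erase_insert hx.2.2]

lemma sum_sum_powersetCard_erase (T : Finset ι) (k : ℕ) (G : Finset ι → ℝ) :
    ∑ a ∈ T, ∑ B ∈ (T.erase a).powersetCard k, G B
      = (#T - k : ℕ) * ∑ B ∈ T.powersetCard k, G B := by
  rw [sum_comm' (t' := T.powersetCard k) (s' := fun B => T \ B), mul_sum]
  · refine sum_congr rfl fun B hB => ?_
    rw [mem_powersetCard] at hB
    rw [sum_const, card_sdiff_of_subset hB.1, hB.2, nsmul_eq_mul]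
  · intro a B
    simp only [mem_powersetCard, subset_erase, mem_sdiff]
    tauto

lemma sum_powersetCard_sum_powersetCard_sdiff (T : Finset ι) (n k : ℕ) (G : Finset ι → ℝ) :
    ∑ A ∈ T.powersetCard n, ∑ B ∈ (T \ A).powersetCard k, G B
      = (#T - k).choose n * ∑ B ∈ T.powersetCard k, G B := by
  rw [sum_comm' (t' := T.powersetCard k) (s' := fun B => (T \ B).powersetCard n), mul_sum]
  · refine sum_congr rfl fun B hB => ?_
    rw [mem_powersetCard] at hB
    rw [sum_const, card_powersetCard, card_sdiff_of_subset hB.1, hB.2, nsmul_eq_mul]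
  · intro A B
    simp only [mem_powersetCard, subset_sdiff, disjoint_comm]
    tauto

lemma sum_powersetCard_sum_powersetCard_sdiff_union (T : Finset ι) (n k : ℕ)
    (G : Finset ι → ℝ) :
    ∑ A ∈ T.powersetCard n, ∑ B ∈ (T \ A).powersetCard k, G (A ∪ B)
      = (n + k).choose n * ∑ D ∈ T.powersetCard (n + k), G D := by
  have inner (A : Finset ι) (hA : A ∈ T.powersetCard n) :
      ∑ B ∈ (T \ A).powersetCard k, G (A ∪ B)
        = ∑ D ∈ (T.powersetCard (n + k)).filter (A ⊆ ·), G D := by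
    rw [mem_powersetCard] at hA
    refine sum_nbij' (A ∪ ·) (· \ A) ?_ ?_ ?_ ?_ fun _ _ => rfl
    · intro B hB
      simp only [mem_powersetCard, subset_sdiff] at hB
      simp only [mem_filter, mem_powersetCard]
      refine ⟨⟨union_subset hA.1 hB.1.1, ?_⟩, subset_union_left⟩
      rw [card_union_of_disjoint hB.1.2.symm, hA.2, hB.2]
    · intro D hD
      simp only [mem_filter, mem_powersetCard] at hD
      simp only [mem_powersetCard, subset_sdiff]
      refine ⟨⟨sdiff_subset.trans hD.1.1, sdiff_disjoint⟩, ?_⟩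
      rw [card_sdiff_of_subset hD.2, hD.1.2, hA.2, Nat.add_sub_cancel_left]
    · intro B hB
      simp only [mem_powersetCard, subset_sdiff] at hB
      exact union_sdiff_cancel_left hB.1.2.symm
    · intro D hD
      exact union_sdiff_of_subset (mem_filter.1 hD).2
  rw [sum_congr rfl inner,
    sum_comm' (t' := T.powersetCard (n + k)) (s' := fun D => D.powersetCard n), mul_sum]
  · refine sum_congr rfl fun D hD => ?_
    rw [mem_powersetCard] at hD
    rw [sum_const, card_powersetCard, hD.2, nsmul_eq_mul]
  · intro A D
    simp only [mem_powersetCard, mem_filter]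
    constructor
    · rintro ⟨⟨hAT, hA⟩, ⟨hDT, hD⟩, hAD⟩; exact ⟨⟨hAD, hA⟩, hDT, hD⟩
    · rintro ⟨⟨hAD, hA⟩, hDT, hD⟩; exact ⟨⟨hAD.trans hDT, hA⟩, ⟨hDT, hD⟩, hAD⟩

lemma card_sub_mul_sum_powersetCard_le (T : Finset ι) (s : ℕ) {G : Finset ι → ℝ}
    (hG : ∀ D ⊆ T, ∀ j ∈ T \ D, G D ≤ G (insert j D)) :
    (#T - s : ℕ) * ∑ D ∈ T.powersetCard s, G D
      ≤ (s + 1 : ℕ) * ∑ D ∈ T.powersetCard (s + 1), G D := by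
  calc (#T - s : ℕ) * ∑ D ∈ T.powersetCard s, G D
      = ∑ D ∈ T.powersetCard s, ∑ j ∈ T \ D, G D := by
        rw [mul_sum]
        refine sum_congr rfl fun D hD => ?_
        rw [mem_powersetCard] at hD
        rw [sum_const, card_sdiff_of_subset hD.1, hD.2, nsmul_eq_mul]
    _ ≤ ∑ D ∈ T.powersetCard s, ∑ j ∈ T \ D, G (insert j D) :=
        sum_le_sum fun D hD => sum_le_sum (hG D (mem_powersetCard.1 hD).1)
    _ = ∑ D ∈ T.powersetCard (s + 1), ∑ j ∈ D, G (insert j (D.erase j)) :=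
        (sum_powersetCard_succ_sum_erase T s fun D j => G (insert j D)).symm
    _ = (s + 1 : ℕ) * ∑ D ∈ T.powersetCard (s + 1), G D := by
        rw [mul_sum]
        refine sum_congr rfl fun D hD => ?_
        rw [← (mem_powersetCard.1 hD).2, ← nsmul_eq_mul, ← sum_const]
        exact sum_congr rfl fun j hj => by rw [insert_erase hj]

/- The next three identities count, in two ways each, the triples `(A, a, B)` of subsets of an
`m`-set with `a ∈ A`, `#A = n + 1`, `#B = k` and `A ∩ B = ∅`. -/

lemma succ_mul_choose_mul_choose_eq_sub (m n k : ℕ) (h : n + 1 + k ≤ m) :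
    (n + 1) * (m.choose (n + 1) * (m - (n + 1)).choose k)
      = (m - n - k) * (m.choose n * (m - n).choose k) := by
  obtain ⟨r, rfl⟩ : ∃ r, m = n + 1 + k + r := ⟨m - (n + 1 + k), by omega⟩
  have h1 := Nat.choose_succ_right_eq (n + 1 + k + r) n
  have h2 := Nat.choose_succ_right_eq (k + r + 1) k
  have h3 := Nat.add_one_mul_choose_eq (k + r) k
  rw [show n + 1 + k + r - (n + 1) = k + r by omega, show n + 1 + k + r - n - k = r + 1 by omega,
    show n + 1 + k + r - n = k + r + 1 by omega]
  rw [show k + r + 1 - k = r + 1 by omega] at h2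
  rw [show n + 1 + k + r - n = k + r + 1 by omega] at h1
  calc (n + 1) * ((n + 1 + k + r).choose (n + 1) * (k + r).choose k)
      = (n + 1 + k + r).choose n * ((k + r + 1) * (k + r).choose k) := by
        rw [← mul_assoc, mul_comm (n + 1), h1]; ring
    _ = _ := by rw [h3, h2]; ring

lemma succ_mul_choose_mul_choose_eq_choose_add (m n k : ℕ) :
    (n + 1) * (m.choose (n + 1) * (m - (n + 1)).choose k)
      = (n + k).choose n * (m * (m - 1).choose (n + k)) := by
  rcases m with _ | M
  · simp
  have h1 := Nat.add_one_mul_choose_eq M n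
  have h2 := Nat.choose_mul (n := M) (k := n + k) (s := n) (Nat.le_add_right _ _)
  rw [Nat.add_sub_cancel_left] at h2
  rw [Nat.add_sub_cancel, Nat.add_sub_add_right, ← mul_assoc, mul_comm (n + 1), ← h1, mul_assoc,
    ← h2]
  ring

lemma succ_mul_choose_mul_choose_eq_choose_sub (m n k : ℕ) :
    (n + 1) * (m.choose (n + 1) * (m - (n + 1)).choose k)
      = (m - 1 - k).choose n * (m * (m - 1).choose k) := by
  rw [succ_mul_choose_mul_choose_eq_choose_add]
  have := Nat.choose_mul (n := m - 1) (k := n + k) (s := k) (Nat.le_add_left _ _)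
  rw [Nat.add_sub_cancel] at this
  rw [Nat.choose_symm_add, ← mul_assoc, mul_comm _ m, mul_assoc, mul_comm (Nat.choose _ k), this]
  ring

end Counting

section SetFunction

variable [DecidableEq ι]

def IsSubmodular (h : Finset ι → ℝ) : Prop :=
  ∀ s t, h (s ∪ t) + h (s ∩ t) ≤ h s + h t

def mutualInfo (h : Finset ι → ℝ) (i : ι) (D : Finset ι) : ℝ :=
  h {i} + h D - h (insert i D)

/-- `Cor(S_A ∣ S_B) = ∑_{i ∈ A} H(S_i ∣ S_B) - H(S_A ∣ S_B)` in terms of joint entropies. -/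
def condCor (h : Finset ι → ℝ) (A B : Finset ι) : ℝ :=
  ∑ i ∈ A, h (insert i B) - (#A - 1) * h B - h (A ∪ B)

variable {h : Finset ι → ℝ}

lemma mutualInfo_le_mutualInfo_insert (hh : IsSubmodular h) {i j : ι} {D : Finset ι}
    (hi : i ∉ D) (hij : i ≠ j) : mutualInfo h i D ≤ mutualInfo h i (insert j D) := by
  have := hh (insert i D) (insert j D)
  rw [insert_union, union_eq_right.2 (subset_insert j D),
    insert_inter_of_notMem (by simp [hi, hij]), inter_eq_left.2 (subset_insert j D)] at this
  unfold mutualInfo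
  linarith

lemma mutualInfo_nonneg (hh : IsSubmodular h) (h0 : h ∅ = 0) {i : ι} {D : Finset ι}
    (hi : i ∉ D) : 0 ≤ mutualInfo h i D := by
  induction D using Finset.induction_on with
  | empty => simp [mutualInfo, h0]
  | insert j D hj ih =>
    rw [mem_insert, not_or] at hi
    exact (ih hi.2).trans (mutualInfo_le_mutualInfo_insert hh hi.2 hi.1)

lemma condCor_eq_erase (h : Finset ι → ℝ) {A : Finset ι} (B : Finset ι) {a : ι} (ha : a ∈ A) :
    condCor h A B = condCor h (A.erase a) B + mutualInfo h a (A.erase a ∪ B)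
      - mutualInfo h a B := by
  unfold condCor mutualInfo
  rw [← add_sum_erase A _ ha, card_erase_of_mem ha, ← insert_union, insert_erase ha,
    Nat.cast_pred (card_pos.2 ⟨a, ha⟩)]
  ring

lemma condCor_empty (h : Finset ι → ℝ) (B : Finset ι) : condCor h ∅ B = 0 := by
  simp [condCor]

end SetFunction

section Averages

variable [Fintype ι] [DecidableEq ι]

lemma sum_powersetCard_sum_compl_sum_erase (n k : ℕ) (F : Finset ι → ι → Finset ι → ℝ) :
    ∑ A ∈ (univ : Finset ι).powersetCard n, ∑ a ∈ Aᶜ, ∑ B ∈ (Aᶜ.erase a).powersetCard k, F A a B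
      = ∑ a, ∑ A ∈ ({a}ᶜ : Finset ι).powersetCard n, ∑ B ∈ ({a}ᶜ \ A).powersetCard k,
          F A a B := by
  have hcompl (A : Finset ι) (a : ι) : Aᶜ.erase a = {a}ᶜ \ A := by
    ext; simp
  simp only [hcompl]
  exact sum_comm' fun A a => by simp [subset_compl_singleton, and_comm]

def sumCondCor (h : Finset ι → ℝ) (n k : ℕ) : ℝ :=
  ∑ A ∈ (univ : Finset ι).powersetCard n, ∑ B ∈ Aᶜ.powersetCard k, condCor h A B

def sumMutualInfo (h : Finset ι → ℝ) (s : ℕ) : ℝ :=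
  ∑ i, ∑ D ∈ ({i}ᶜ : Finset ι).powersetCard s, mutualInfo h i D

def avgCondCor (h : Finset ι → ℝ) (n k : ℕ) : ℝ :=
  sumCondCor h n k
    / (((Fintype.card ι).choose n : ℝ) * ((Fintype.card ι - n).choose k : ℝ))

def avgMutualInfo (h : Finset ι → ℝ) (s : ℕ) : ℝ :=
  sumMutualInfo h s / ((Fintype.card ι : ℝ) * ((Fintype.card ι - 1).choose s : ℝ))

variable (h : Finset ι → ℝ)

lemma succ_mul_sumCondCor_eq_sum_compl (n k : ℕ) :
    (n + 1) * sumCondCor h (n + 1) k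
      = ∑ A ∈ (univ : Finset ι).powersetCard n, ∑ a ∈ Aᶜ, ∑ B ∈ (Aᶜ.erase a).powersetCard k,
          (condCor h A B + mutualInfo h a (A ∪ B) - mutualInfo h a B) :=
  calc (n + 1) * sumCondCor h (n + 1) k
      = ∑ A ∈ (univ : Finset ι).powersetCard (n + 1), ∑ a ∈ A,
          ∑ B ∈ (insert a (A.erase a))ᶜ.powersetCard k,
            (condCor h (A.erase a) B + mutualInfo h a (A.erase a ∪ B) - mutualInfo h a B) := by
        rw [sumCondCor, mul_sum]
        refine sum_congr rfl fun A hA => ?_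
        have hcard : (n + 1 : ℝ) = #A := by rw [(mem_powersetCard.1 hA).2]; push_cast; ring
        rw [hcard, ← nsmul_eq_mul, ← sum_const]
        refine sum_congr rfl fun a ha => ?_
        rw [insert_erase ha]
        exact sum_congr rfl fun B _ => condCor_eq_erase h B ha
    _ = ∑ A ∈ (univ : Finset ι).powersetCard n, ∑ a ∈ univ \ A,
          ∑ B ∈ (insert a A)ᶜ.powersetCard k,
            (condCor h A B + mutualInfo h a (A ∪ B) - mutualInfo h a B) :=
        sum_powersetCard_succ_sum_erase _ _ fun A a => ∑ B ∈ (insert a A)ᶜ.powersetCard k,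
          (condCor h A B + mutualInfo h a (A ∪ B) - mutualInfo h a B)
    _ = _ := by simp only [compl_insert, ← compl_eq_univ_sdiff]

lemma succ_mul_sumCondCor (n k : ℕ) :
    (n + 1) * sumCondCor h (n + 1) k
      = (Fintype.card ι - n - k : ℕ) * sumCondCor h n k
        + (n + k).choose n * sumMutualInfo h (n + k)
        - (Fintype.card ι - 1 - k).choose n * sumMutualInfo h k := by
  rw [succ_mul_sumCondCor_eq_sum_compl]
  simp only [sum_add_distrib, sum_sub_distrib]
  rw [sum_powersetCard_sum_compl_sum_erase n k fun A a B => mutualInfo h a (A ∪ B),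
    sum_powersetCard_sum_compl_sum_erase n k fun A a B => mutualInfo h a B,
    sumCondCor, sumMutualInfo, sumMutualInfo, mul_sum, mul_sum, mul_sum]
  congr 2
  · refine sum_congr rfl fun A hA => ?_
    rw [sum_sum_powersetCard_erase, card_compl, (mem_powersetCard.1 hA).2]
  · exact sum_congr rfl fun a _ => sum_powersetCard_sum_powersetCard_sdiff_union _ n k _
  · funext a
    rw [sum_powersetCard_sum_powersetCard_sdiff, card_compl, card_singleton]

lemma avgCondCor_succ {n k : ℕ} (hnk : n + 1 + k ≤ Fintype.card ι) :
    avgCondCor h (n + 1) k = avgCondCor h n k + avgMutualInfo h (n + k) - avgMutualInfo h k := by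
  simp only [avgCondCor, avgMutualInfo]
  rw [← mul_div_mul_left (sumCondCor h (n + 1) k) _ n.cast_add_one_ne_zero,
    succ_mul_sumCondCor, sub_div, add_div]
  set m := Fintype.card ι
  set N : ℝ := (n + 1) * (m.choose (n + 1) * (m - (n + 1)).choose k) with hN
  have cancel {a : ℕ} {D : ℝ} (hND : N = a * D) (ha : 0 < a) (x : ℝ) : a * x / N = x / D := by
    rw [hND, mul_div_mul_left _ _ (by positivity)]
  rw [cancel (D := m.choose n * (m - n).choose k)
      (by rw [hN]; exact_mod_cast succ_mul_choose_mul_choose_eq_sub m n k hnk) (by omega),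
    cancel (D := m * (m - 1).choose (n + k))
      (by rw [hN]; exact_mod_cast succ_mul_choose_mul_choose_eq_choose_add m n k)
      (Nat.choose_pos (by omega)),
    cancel (D := m * (m - 1).choose k)
      (by rw [hN]; exact_mod_cast succ_mul_choose_mul_choose_eq_choose_sub m n k)
      (Nat.choose_pos (by omega))]

lemma avgCondCor_zero_left (k : ℕ) : avgCondCor h 0 k = 0 := by
  simp [avgCondCor, sumCondCor, condCor_empty]

lemma avgCondCor_eq_sum {n k : ℕ} (hnk : n + k ≤ Fintype.card ι) :
    avgCondCor h n k = ∑ j ∈ range n, (avgMutualInfo h (j + k) - avgMutualInfo h k) := by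
  induction n with
  | zero => simp [avgCondCor_zero_left]
  | succ n ih =>
    rw [avgCondCor_succ h (by omega), ih (by omega), sum_range_succ]
    ring

variable {h}

lemma avgMutualInfo_nonneg (hh : IsSubmodular h) (h0 : h ∅ = 0) (s : ℕ) :
    0 ≤ avgMutualInfo h s := by
  refine div_nonneg (sum_nonneg fun i _ => sum_nonneg fun D hD => ?_) (by positivity)
  refine mutualInfo_nonneg hh h0 fun hi => ?_
  simpa using (mem_powersetCard.1 hD).1 hi

lemma avgMutualInfo_le_succ (hh : IsSubmodular h) {s : ℕ} (hs : s + 1 ≤ Fintype.card ι - 1) :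
    avgMutualInfo h s ≤ avgMutualInfo h (s + 1) := by
  set m := Fintype.card ι
  have hsum : (m - 1 - s : ℕ) * sumMutualInfo h s ≤ (s + 1 : ℕ) * sumMutualInfo h (s + 1) := by
    rw [sumMutualInfo, sumMutualInfo, mul_sum, mul_sum]
    refine sum_le_sum fun i _ => ?_
    have hT : #({i}ᶜ : Finset ι) = m - 1 := by rw [card_compl, card_singleton]
    refine hT ▸ card_sub_mul_sum_powersetCard_le _ s fun D hD j hj => ?_
    simp only [mem_sdiff, mem_compl, mem_singleton] at hj
    exact mutualInfo_le_mutualInfo_insert hh (fun hi => by simpa using hD hi) (Ne.symm hj.1)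
  have hchoose :
      ((m - 1).choose (s + 1) * (s + 1 : ℕ) : ℝ) = (m - 1).choose s * (m - 1 - s : ℕ) := by
    exact_mod_cast Nat.choose_succ_right_eq (m - 1) s
  have hc₀ : (0 : ℝ) < (m - 1).choose s := by exact_mod_cast Nat.choose_pos (by omega)
  have hc₁ : (0 : ℝ) < (m - 1).choose (s + 1) := by exact_mod_cast Nat.choose_pos hs
  have hm : (0 : ℝ) < m := by exact_mod_cast (show 0 < m by omega)
  rw [avgMutualInfo, avgMutualInfo, div_le_div_iff₀ (by positivity) (by positivity)]
  refine le_of_mul_le_mul_right ?_ (show (0 : ℝ) < (s + 1 : ℕ) by positivity)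
  calc sumMutualInfo h s * (m * (m - 1).choose (s + 1)) * (s + 1 : ℕ)
      = m * (m - 1).choose s * ((m - 1 - s : ℕ) * sumMutualInfo h s) := by
        rw [mul_assoc, mul_assoc, hchoose]; ring
    _ ≤ m * (m - 1).choose s * ((s + 1 : ℕ) * sumMutualInfo h (s + 1)) :=
        mul_le_mul_of_nonneg_left hsum (by positivity)
    _ = _ := by ring

lemma avgMutualInfo_monotoneOn (hh : IsSubmodular h) :
    MonotoneOn (avgMutualInfo h) (Set.Iic (Fintype.card ι - 1)) :=
  monotoneOn_of_le_add_one Set.ordConnected_Iic fun _ _ _ hs => avgMutualInfo_le_succ hh hs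

end Averages

lemma sum_range_sub_comm (g : ℕ → ℝ) (a b : ℕ) :
    ∑ k ∈ range a, (g (b + k) - g k) = ∑ k ∈ range b, (g (a + k) - g k) := by
  have hab := sum_range_add g a b
  have hba := sum_range_add g b a
  rw [add_comm b a] at hba
  simp only [sum_sub_distrib]
  linarith

lemma sum_range_natCast (n : ℕ) : ∑ j ∈ range n, (j : ℝ) = n * (n - 1) / 2 := by
  induction n with
  | zero => simp
  | succ n ih => rw [sum_range_succ, ih]; push_cast; ring

theorem exists_avgCondCor_le [Fintype ι] [DecidableEq ι] {h : Finset ι → ℝ}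
    (hh : IsSubmodular h) (h0 : h ∅ = 0) {n kmax : ℕ} (hmn : n + kmax ≤ Fintype.card ι) :
    ∃ k ≤ kmax, avgCondCor h n k
      ≤ (n * (n - 1) / (2 * (kmax + 1)) : ℝ) * avgMutualInfo h (n + kmax - 1) := by
  set g := avgMutualInfo h
  set c := (n * (n - 1) / (2 * (kmax + 1)) : ℝ) * g (n + kmax - 1)
  have hsum : ∑ k ∈ range (kmax + 1), avgCondCor h n k ≤ ∑ k ∈ range (kmax + 1), c :=
    calc ∑ k ∈ range (kmax + 1), avgCondCor h n k
        = ∑ j ∈ range n, ∑ t ∈ range j, (g (kmax + 1 + t) - g t) := by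
          rw [sum_congr rfl fun k hk => avgCondCor_eq_sum h (by simp at hk; omega), sum_comm]
          exact sum_congr rfl fun j _ => sum_range_sub_comm g (kmax + 1) j
      _ ≤ ∑ j ∈ range n, ∑ t ∈ range j, g (n + kmax - 1) := by
          refine sum_le_sum fun j hj => sum_le_sum fun t ht => ?_
          simp only [mem_range] at hj ht
          have hmono := avgMutualInfo_monotoneOn hh (a := kmax + 1 + t) (b := n + kmax - 1)
            (by simp; omega) (by simp; omega) (by omega)
          linarith [avgMutualInfo_nonneg hh h0 t]
      _ = ∑ k ∈ range (kmax + 1), c := by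
          simp only [sum_const, card_range, nsmul_eq_mul, ← sum_mul, sum_range_natCast, c]
          push_cast
          field_simp
  obtain ⟨k, hk, hle⟩ := exists_le_of_sum_le nonempty_range_add_one hsum
  exact ⟨k, Nat.lt_add_one_iff.1 (mem_range.1 hk), hle⟩

section Coordinates

variable {X : Type*} (S : Ω → ι → X)

def jointEntropy (p : Ω → ℝ) (S : Ω → ι → X) (C : Finset ι) : ℝ :=
  entropy p fun ω => C.restrict (S ω)

lemma restrict_eq_restrict_iff {C : Finset ι} {f g : ι → X} :
    C.restrict f = C.restrict g ↔ ∀ i ∈ C, f i = g i := by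
  simp [funext_iff]

lemma entropy_eq_jointEntropy {Y : Ω → β} {C : Finset ι}
    (hY : ∀ ω ω', Y ω = Y ω' ↔ ∀ i ∈ C, S ω i = S ω' i) : entropy p Y = jointEntropy p S C :=
  entropy_congr fun ω ω' => by rw [hY, restrict_eq_restrict_iff]

lemma jointEntropy_empty (hp : IsPMF p) : jointEntropy p S ∅ = 0 :=
  entropy_eq_zero hp.2 fun _ _ => Subsingleton.elim _ _

variable [DecidableEq ι]

lemma entropy_prod_eq_jointEntropy_insert (i : ι) (B : Finset ι) :
    entropy p (fun ω => (S ω i, B.restrict (S ω))) = jointEntropy p S (insert i B) :=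
  entropy_eq_jointEntropy S fun ω ω' => by
    simp [Prod.ext_iff, restrict_eq_restrict_iff]

variable [Fintype X]

lemma jointEntropy_isSubmodular (hp : ∀ ω, 0 ≤ p ω) : IsSubmodular (jointEntropy p S) := by
  intro s t
  convert entropy_submodular hp (fun ω => s.restrict (S ω)) (fun ω => t.restrict (S ω))
    (fun ω => (s ∩ t).restrict (S ω)) using 2 <;>
  refine (entropy_eq_jointEntropy S fun ω ω' => ?_).symm <;>
  simp only [Prod.ext_iff, restrict_eq_restrict_iff, mem_union, mem_inter] <;> grind

lemma CondCor_restrict (hp : ∀ ω, 0 ≤ p ω) (A B : Finset ι) :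
    CondCor p (fun (a : A) ω => S ω a) (fun ω => B.restrict (S ω))
      = condCor (jointEntropy p S) A B := by
  have hAB : entropy p (fun ω => ((fun a : A => S ω a), B.restrict (S ω)))
      = jointEntropy p S (A ∪ B) :=
    entropy_eq_jointEntropy S fun ω ω' => by
      simp only [Prod.ext_iff, funext_iff, Subtype.forall, Finset.restrict, mem_union]
      grind
  rw [CondCor_eq_entropy hp, hAB, condCor, Fintype.card_coe,
    ← sum_coe_sort A fun i => jointEntropy p S (insert i B)]
  simp only [entropy_prod_eq_jointEntropy_insert]
  rfl

lemma MI_restrict (hp : ∀ ω, 0 ≤ p ω) (i : ι) (B : Finset ι) :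
    MI p (fun ω => S ω i) (fun ω => B.restrict (S ω)) = mutualInfo (jointEntropy p S) i B := by
  rw [MI_eq_entropy hp, mutualInfo, entropy_prod_eq_jointEntropy_insert,
    entropy_eq_jointEntropy S (C := {i}) fun ω ω' => by simp]
  rfl

end Coordinates

end CorrelationRounding

/-- Correlation rounding: for any random variable `S` on `X^m` and `n + k_max ≤ m`, there exists
`k ≤ k_max` with `E_{A,B}[Cor(S_A ∣ S_B)] ≤ (n(n−1)/(2(k_max+1))) · E_{i,B'}[I(S_i;S_{B'})]`,
where `A` is a uniform size-`n` subset of `[m]`, `B` a uniform size-`k` subset of `[m]∖A`,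
`i` uniform in `[m]`, and `B'` a uniform size-`(n+k_max−1)` subset of `[m]∖{i}`. -/
theorem statement12 {Ω X : Type*} [Fintype Ω] [Fintype X]
    (p : Ω → ℝ) (hp : IsPMF p) (m n kmax : ℕ) (hmn : n + kmax ≤ m)
    (S : Ω → Fin m → X) :
    ∃ k ≤ kmax,
      (∑ A ∈ (univ : Finset (Fin m)).powersetCard n, ∑ B ∈ Aᶜ.powersetCard k,
            CondCor p (fun (i : A) ω => S ω i.1) (fun ω => fun (j : B) => S ω j.1))
          / ((m.choose n : ℝ) * ((m - n).choose k : ℝ))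
        ≤ ((n : ℝ) * ((n : ℝ) - 1) / (2 * ((kmax : ℝ) + 1))) *
          ((∑ i : Fin m, ∑ B ∈ ({i}ᶜ : Finset (Fin m)).powersetCard (n + kmax - 1),
              MI p (fun ω => S ω i) (fun ω => fun (j : B) => S ω j.1))
            / ((m : ℝ) * ((m - 1).choose (n + kmax - 1) : ℝ))) := by
  obtain ⟨k, hk, hle⟩ := CorrelationRounding.exists_avgCondCor_le
    (CorrelationRounding.jointEntropy_isSubmodular S hp.1)
    (CorrelationRounding.jointEntropy_empty S hp) (by simpa using hmn)
  refine ⟨k, hk, ?_⟩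
  simp only [CorrelationRounding.avgCondCor, CorrelationRounding.avgMutualInfo,
    Fintype.card_fin] at hle
  convert hle using 3
  · exact sum_congr rfl fun A _ => sum_congr rfl fun B _ =>
      CorrelationRounding.CondCor_restrict S hp.1 A B
  · exact sum_congr rfl fun i _ => sum_congr rfl fun B _ =>
      CorrelationRounding.MI_restrict S hp.1 i B
end
end
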